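/- arXiv:2605.28703 — 3 statements merged into one kernel-verified Lean document; each statement's English description precedes it below -/
import Mathlib

section
/- For every constant integer k ≥ 2 there exists a constant C > 0 such that, for all sufficiently large positive integer multiples n of k, the expected runtime (number of iterations until the all-ones string is first generated) of the Baldwinian (1+1) EA with best-improvement local search on DLB_k over {0,1}^n is at most C·n^{2}. -/
open Finset
open scoped ENNReal

noncomputable section

/-- Bit strings of length `n`. -/
abbrev BitStr (n : ℕ) := Fin n → Bool

/-- The all-ones string. -/
def allOnes (n : ℕ) : BitStr n := fun _ => true

/-- The number of ones in the `ℓ`-th block (`0`-indexed), i.e. among the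
(`0`-indexed) positions `ℓ*k, …, ℓ*k + k - 1`. -/
def blockOnes (k n : ℕ) (x : BitStr n) (ℓ : ℕ) : ℕ :=
  (Finset.univ.filter fun i : Fin n => ℓ * k ≤ i.1 ∧ i.1 < ℓ * k + k ∧ x i = true).card

/-- The number of leading all-ones blocks of `x` (at most `n / k`).  For
`x ≠ allOnes n` (and `k ∣ n`) this is `c(x) - 1`, the (`0`-indexed) index of the
critical block. -/
def leadBlocks (k n : ℕ) (x : BitStr n) : ℕ :=
  Nat.findGreatest (fun j => ∀ ℓ < j, blockOnes k n x ℓ = k) (n / k)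

/-- The DeceptiveLeadingBlocks function with block length `k`:
`DLB_k(x) = k (c(x) - 1) + (k - 1 - ‖x_{B_{c(x)}}‖₁)` for `x` not the all-ones
string, and `DLB_k` of the all-ones string is `n`. -/
def dlb (k n : ℕ) (x : BitStr n) : ℕ :=
  if x = allOnes n then n
  else k * leadBlocks k n x + (k - 1 - blockOnes k n x (leadBlocks k n x))

/-- Bitwise mutation with rate `1/n`: each bit is flipped independently with
probability `1/n`. -/
def mutatePMF (n : ℕ) (x : BitStr n) : PMF (BitStr n) :=
  PMF.ofFintype
    (fun y => ∏ i, if y i = x i then 1 - (n : ℝ≥0∞)⁻¹ else (n : ℝ≥0∞)⁻¹)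
    (by
      classical
      have key := (Fintype.prod_sum
        (fun (i : Fin n) (b : Bool) => if b = x i then 1 - (n : ℝ≥0∞)⁻¹ else (n : ℝ≥0∞)⁻¹)).symm
      rw [key]
      refine Finset.prod_eq_one fun i _ => ?_
      have h1 : (1 : ℝ≥0∞) ≤ (n : ℝ≥0∞) := by exact_mod_cast i.pos
      have hinv : (n : ℝ≥0∞)⁻¹ ≤ 1 := ENNReal.inv_le_one.mpr h1
      rcases Bool.eq_false_or_eq_true (x i) with hx | hx <;>
        simp [Fintype.sum_bool, hx, tsub_add_cancel_of_le hinv, add_tsub_cancel_of_le hinv])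

/-- The probability of an event `E` under a probability mass function `p`. -/
def prOf {α : Type*} (p : PMF α) (E : Set α) : ℝ≥0∞ :=
  ∑' a, E.indicator (fun a => p a) a

/-- The Hamming-distance-1 neighbourhood of `x`. -/
def nbhd (n : ℕ) (x : BitStr n) : Finset (BitStr n) :=
  Finset.univ.image fun i : Fin n => Function.update x i (!x i)

/-- Best-improvement local search with uniformly random tie-breaking, with fuel:
as long as some Hamming-distance-1 neighbour has a strictly larger `f`-value, move
to a uniformly random neighbour of maximal `f`-value. -/
def lsAux (n : ℕ) (f : BitStr n → ℕ) : ℕ → BitStr n → PMF (BitStr n)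
  | 0, x => PMF.pure x
  | m + 1, x =>
    if h : ∃ y ∈ nbhd n x, f x < f y then
      (PMF.uniformOfFinset
          ((nbhd n x).filter fun y => ∀ z ∈ nbhd n x, f z ≤ f y)
          (by
            obtain ⟨y, hy, -⟩ := h
            obtain ⟨b, hb, hmax⟩ := Finset.exists_max_image (nbhd n x) f ⟨y, hy⟩
            exact ⟨b, Finset.mem_filter.mpr ⟨hb, hmax⟩⟩)).bind
        (lsAux n f m)
    else PMF.pure x

/-- Best-improvement local search on `dlb k n` started at `x`.  Since every step
strictly increases the `dlb`-value, which is bounded by `n + k - 1`, the fuel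
`n + k + 1` is never exhausted, so this is exactly best-improvement local search,
terminating at a local optimum. -/
def localSearch (k n : ℕ) (x : BitStr n) : PMF (BitStr n) :=
  lsAux n (dlb k n) (n + k + 1) x

/-- One iteration of the Baldwinian (1+1) EA on `dlb k n`.  The state consists of
the current individual together with its stored Baldwinian fitness (the
`dlb`-value of the result of the run of local search performed when the
individual was created), and a flag recording whether the all-ones string has
been generated (by mutation or by a local search evaluation).  The individuals
themselves are never modified by local search. -/
def baldwinStep (k n : ℕ) (s : (BitStr n × ℕ) × Bool) : PMF ((BitStr n × ℕ) × Bool) :=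
  (mutatePMF n s.1.1).bind fun y =>
    (localSearch k n y).map fun z =>
      (if s.1.2 ≤ dlb k n z then (y, dlb k n z) else s.1,
       if s.2 = true ∨ y = allOnes n ∨ z = allOnes n then true else false)

/-- The state distribution of the Baldwinian (1+1) EA on `dlb k n` after `t`
iterations; the initial individual is uniformly random, left unchanged, and its
Baldwinian fitness is evaluated by one run of local search. -/
def baldwinDist (k n : ℕ) : ℕ → PMF ((BitStr n × ℕ) × Bool)
  | 0 => (PMF.uniformOfFintype (BitStr n)).bind fun x0 =>
      (localSearch k n x0).map fun z =>
        ((x0, dlb k n z), if x0 = allOnes n ∨ z = allOnes n then true else false)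
  | t + 1 => (baldwinDist k n t).bind (baldwinStep k n)

/-- The expected runtime (expected number of iterations until the all-ones string
is first generated, by mutation or by a local search evaluation) of the
Baldwinian (1+1) EA on `dlb k n`. -/
def baldwinERT (k n : ℕ) : ℝ≥0∞ :=
  ∑' t : ℕ, prOf (baldwinDist k n t) {s | s.2 = false}
/-! ### Part 1: blocks -/

section Blocks

variable {k n : ℕ}

def blockSet (k n : ℕ) (ℓ : ℕ) : Finset (Fin n) :=
  Finset.univ.filter fun i : Fin n => ℓ * k ≤ i.1 ∧ i.1 < ℓ * k + k

lemma blockOnes_eq_card (x : BitStr n) (ℓ : ℕ) :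
    blockOnes k n x ℓ = ((blockSet k n ℓ).filter fun i => x i = true).card := by
  unfold blockOnes blockSet
  rw [Finset.filter_filter]
  congr 1
  apply Finset.filter_congr
  intro j _
  simp [and_assoc]

lemma card_blockSet (hdvd : k ∣ n) {ℓ : ℕ} (hℓ : ℓ < n / k) : (blockSet k n ℓ).card = k := by
  have hbound : ℓ * k + k ≤ n := by
    have h1 : (ℓ + 1) * k ≤ (n / k) * k := Nat.mul_le_mul_right k hℓ
    rwa [Nat.div_mul_cancel hdvd, add_mul, one_mul] at h1
  have hset : blockSet k n ℓ = Finset.univ.image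
      (fun j : Fin k => (⟨ℓ * k + j.1, lt_of_lt_of_le (Nat.add_lt_add_left j.2 (ℓ*k)) hbound⟩ : Fin n)) := by
    ext i
    simp only [blockSet, Finset.mem_filter, Finset.mem_univ, true_and, Finset.mem_image]
    constructor
    · rintro ⟨h1, h2⟩
      refine ⟨⟨i.1 - ℓ * k, by omega⟩, ?_⟩
      apply Fin.ext
      simp only []
      omega
    · rintro ⟨j, rfl⟩
      simp only []
      constructor
      · exact Nat.le_add_right _ _
      · exact Nat.add_lt_add_left j.2 (ℓ*k)
  rw [hset, Finset.card_image_of_injective _ (fun a b hab => by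
        apply Fin.ext
        have := congrArg Fin.val hab
        simpa using this),
      Finset.card_univ, Fintype.card_fin]

lemma blockOnes_le (hdvd : k ∣ n) (x : BitStr n) {ℓ : ℕ} (hℓ : ℓ < n / k) :
    blockOnes k n x ℓ ≤ k := by
  rw [blockOnes_eq_card]
  calc ((blockSet k n ℓ).filter fun i => x i = true).card ≤ (blockSet k n ℓ).card :=
        Finset.card_filter_le _ _
    _ = k := card_blockSet hdvd hℓ

lemma full_forall (hdvd : k ∣ n) (x : BitStr n) {ℓ : ℕ} (hℓ : ℓ < n / k)
    (hfull : blockOnes k n x ℓ = k) {i : Fin n}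
    (hib : ℓ * k ≤ i.1 ∧ i.1 < ℓ * k + k) : x i = true := by
  rw [blockOnes_eq_card] at hfull
  have hsub : (blockSet k n ℓ).filter (fun i => x i = true) = blockSet k n ℓ := by
    apply Finset.eq_of_subset_of_card_le (Finset.filter_subset _ _)
    rw [hfull, card_blockSet hdvd hℓ]
  have hi : i ∈ blockSet k n ℓ := by
    simp only [blockSet, Finset.mem_filter, Finset.mem_univ, true_and]; exact hib
  rw [← hsub] at hi
  exact (Finset.mem_filter.mp hi).2

lemma forall_full (hdvd : k ∣ n) (x : BitStr n) {ℓ : ℕ} (hℓ : ℓ < n / k)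
    (h : ∀ i : Fin n, ℓ * k ≤ i.1 → i.1 < ℓ * k + k → x i = true) :
    blockOnes k n x ℓ = k := by
  rw [blockOnes_eq_card]
  rw [Finset.filter_true_of_mem (fun i hi => by
    simp only [blockSet, Finset.mem_filter, Finset.mem_univ, true_and] at hi
    exact h i hi.1 hi.2)]
  exact card_blockSet hdvd hℓ

lemma exists_one_of_pos (x : BitStr n) {ℓ : ℕ} (h : 1 ≤ blockOnes k n x ℓ) :
    ∃ i : Fin n, (ℓ * k ≤ i.1 ∧ i.1 < ℓ * k + k) ∧ x i = true := by
  rw [blockOnes_eq_card] at h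
  obtain ⟨i, hi⟩ := Finset.card_pos.mp h
  rw [Finset.mem_filter] at hi
  refine ⟨i, ?_, hi.2⟩
  have := hi.1
  simp only [blockSet, Finset.mem_filter, Finset.mem_univ, true_and] at this
  exact this

lemma exists_zero_of_notfull (hdvd : k ∣ n) (x : BitStr n) {ℓ : ℕ} (hℓ : ℓ < n / k)
    (h : blockOnes k n x ℓ ≠ k) :
    ∃ i : Fin n, (ℓ * k ≤ i.1 ∧ i.1 < ℓ * k + k) ∧ x i = false := by
  by_contra hcon
  push_neg at hcon
  apply h
  apply forall_full hdvd x hℓ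
  intro i h1 h2
  rcases Bool.eq_false_or_eq_true (x i) with hb | hb
  · exact hb
  · exact absurd hb (hcon i ⟨h1, h2⟩)

lemma allOnes_iff (hdvd : k ∣ n) (x : BitStr n) :
    x = allOnes n ↔ ∀ ℓ < n / k, blockOnes k n x ℓ = k := by
  constructor
  · rintro rfl ℓ hℓ
    exact forall_full hdvd _ hℓ (fun _ _ _ => rfl)
  · intro h
    funext i
    have hn0 : 0 < k := by
      rcases Nat.eq_zero_or_pos k with h0 | h0
      · exfalso
        subst h0
        rw [Nat.zero_dvd] at hdvd
        subst hdvd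
        exact absurd i.2 (Nat.not_lt_zero _)
      · exact h0
    have hℓ : i.1 / k < n / k := by
      apply Nat.div_lt_div_of_lt_of_dvd hdvd i.2
    have := h (i.1 / k) hℓ
    have hub : i.1 < i.1 / k * k + k := by
      conv_lhs => rw [← Nat.div_add_mod i.1 k]
      rw [Nat.mul_comm k (i.1 / k)]
      exact Nat.add_lt_add_left (Nat.mod_lt _ hn0) _
    exact full_forall hdvd x hℓ this ⟨Nat.div_mul_le_self i.1 k, hub⟩

end Blocks
/-! ### Part 2: updates, leadBlocks, firstWeak -/

section Lead

variable {k n : ℕ}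

lemma blockOnes_update_other (x : BitStr n) (i : Fin n) (b : Bool) {ℓ : ℕ}
    (h : ¬(ℓ * k ≤ i.1 ∧ i.1 < ℓ * k + k)) :
    blockOnes k n (Function.update x i b) ℓ = blockOnes k n x ℓ := by
  unfold blockOnes
  congr 1
  apply Finset.filter_congr
  intro j _
  by_cases hj : j = i
  · subst hj
    constructor
    · rintro ⟨h1, h2, _⟩; exact absurd ⟨h1, h2⟩ h
    · rintro ⟨h1, h2, _⟩; exact absurd ⟨h1, h2⟩ h
  · rw [Function.update_of_ne hj]

lemma blockOnes_update_true (x : BitStr n) (i : Fin n) {ℓ : ℕ}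
    (hib : ℓ * k ≤ i.1 ∧ i.1 < ℓ * k + k) (hx : x i = false) :
    blockOnes k n (Function.update x i true) ℓ = blockOnes k n x ℓ + 1 := by
  rw [blockOnes_eq_card, blockOnes_eq_card]
  have hmem : i ∈ blockSet k n ℓ := by
    simp only [blockSet, Finset.mem_filter, Finset.mem_univ, true_and]; exact hib
  have hset : (blockSet k n ℓ).filter (fun j => Function.update x i true j = true)
      = insert i ((blockSet k n ℓ).filter fun j => x j = true) := by
    ext j
    simp only [Finset.mem_filter, Finset.mem_insert]
    by_cases hj : j = i
    · subst hj
      simp [Function.update_self, hmem]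
    · rw [Function.update_of_ne hj]
      constructor
      · rintro ⟨h1, h2⟩; exact Or.inr ⟨h1, h2⟩
      · rintro (h1 | h2)
        · exact absurd h1 hj
        · exact h2
  rw [hset, Finset.card_insert_of_notMem (by
    simp only [Finset.mem_filter, not_and]
    intro _
    rw [hx]; simp)]

lemma blockOnes_update_false (x : BitStr n) (i : Fin n) {ℓ : ℕ}
    (hib : ℓ * k ≤ i.1 ∧ i.1 < ℓ * k + k) (hx : x i = true) :
    blockOnes k n x ℓ = blockOnes k n (Function.update x i false) ℓ + 1 := by
  have h1 : Function.update (Function.update x i false) i true = x := by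
    funext j
    by_cases hj : j = i
    · subst hj; rw [Function.update_self, hx]
    · rw [Function.update_of_ne hj, Function.update_of_ne hj]
  have := blockOnes_update_true (Function.update x i false) i hib (Function.update_self i false x)
  rw [h1] at this
  exact this

/-- Characterization of `leadBlocks`. -/
lemma leadBlocks_eq_of (x : BitStr n) {j : ℕ} (hj : j ≤ n / k)
    (hfull : ∀ ℓ < j, blockOnes k n x ℓ = k)
    (hstop : j = n / k ∨ blockOnes k n x j ≠ k) :
    leadBlocks k n x = j := by
  classical
  have hge : j ≤ leadBlocks k n x := by
    unfold leadBlocks; exact Nat.le_findGreatest hj hfull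
  rcases Nat.lt_or_ge j (leadBlocks k n x) with hlt | hge'
  · exfalso
    have hspec : ∀ ℓ < leadBlocks k n x, blockOnes k n x ℓ = k := by
      unfold leadBlocks
      exact Nat.findGreatest_spec (P := fun j => ∀ ℓ < j, blockOnes k n x ℓ = k) (m := 0)
        (Nat.zero_le _) (fun ℓ hℓ => absurd hℓ (Nat.not_lt_zero ℓ))
    rcases hstop with h | h
    · have hle : leadBlocks k n x ≤ n / k := by
        unfold leadBlocks; exact Nat.findGreatest_le _
      omega
    · exact h (hspec j hlt)
  · omega

lemma leadBlocks_facts (hdvd : k ∣ n) (hk : 2 ≤ k) (x : BitStr n) (hx : x ≠ allOnes n) :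
    leadBlocks k n x < n / k ∧ (∀ ℓ < leadBlocks k n x, blockOnes k n x ℓ = k) ∧
      blockOnes k n x (leadBlocks k n x) ≠ k := by
  classical
  have hspec : ∀ ℓ < leadBlocks k n x, blockOnes k n x ℓ = k := by
    unfold leadBlocks
    exact Nat.findGreatest_spec (P := fun j => ∀ ℓ < j, blockOnes k n x ℓ = k) (m := 0)
      (Nat.zero_le _) (fun ℓ hℓ => absurd hℓ (Nat.not_lt_zero ℓ))
  have hle : leadBlocks k n x ≤ n / k := by
    unfold leadBlocks; exact Nat.findGreatest_le _
  have hlt : leadBlocks k n x < n / k := by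
    rcases Nat.lt_or_ge (leadBlocks k n x) (n / k) with h | h
    · exact h
    · exfalso
      apply hx
      rw [allOnes_iff hdvd]
      intro ℓ hℓ
      exact hspec ℓ (by omega)
  refine ⟨hlt, hspec, ?_⟩
  intro hfull
  have : leadBlocks k n x + 1 ≤ leadBlocks k n x := by
    conv_rhs => unfold leadBlocks
    apply Nat.le_findGreatest (by omega)
    intro ℓ hℓ
    rcases Nat.lt_or_ge ℓ (leadBlocks k n x) with h | h
    · exact hspec ℓ h
    · have : ℓ = leadBlocks k n x := by omega
      rw [this]; exact hfull
  omega

lemma dlb_eq_of (hdvd : k ∣ n) (hk : 2 ≤ k) (x : BitStr n) (hx : x ≠ allOnes n) :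
    dlb k n x = k * leadBlocks k n x + (k - 1 - blockOnes k n x (leadBlocks k n x)) := by
  rw [dlb, if_neg hx]

lemma dlb_le_n (hdvd : k ∣ n) (hk : 2 ≤ k) (x : BitStr n) : dlb k n x ≤ n := by
  by_cases hx : x = allOnes n
  · rw [dlb, if_pos hx]
  · obtain ⟨hlt, _, _⟩ := leadBlocks_facts hdvd hk x hx
    rw [dlb_eq_of hdvd hk x hx]
    have h2 : k * (n / k) = n := Nat.mul_div_cancel' hdvd
    have hA : k * (leadBlocks k n x + 1) ≤ n := by
      calc k * (leadBlocks k n x + 1) ≤ k * (n / k) := Nat.mul_le_mul_left k (by omega)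
        _ = n := h2
    have hB : k * (leadBlocks k n x + 1) = k * leadBlocks k n x + k := by ring
    omega

lemma dlb_lt_n (hdvd : k ∣ n) (hk : 2 ≤ k) (x : BitStr n) (hx : x ≠ allOnes n) :
    dlb k n x < n := by
  obtain ⟨hlt, _, _⟩ := leadBlocks_facts hdvd hk x hx
  rw [dlb_eq_of hdvd hk x hx]
  have h2 : k * (n / k) = n := Nat.mul_div_cancel' hdvd
  have h1 : k * leadBlocks k n x + k ≤ n := by
    calc k * leadBlocks k n x + k = k * (leadBlocks k n x + 1) := by ring
      _ ≤ k * (n / k) := Nat.mul_le_mul_left k (by omega)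
      _ = n := h2
  omega

/-- `firstWeak x` : the first block (index `< n/k`) with at most `k-2` ones, or `n/k`. -/
def firstWeak (k n : ℕ) (x : BitStr n) : ℕ :=
  if h : ∃ ℓ, ℓ < n / k ∧ blockOnes k n x ℓ ≤ k - 2 then Nat.find h else n / k

/-- The deterministic value of local search started at `x`. -/
def lsVal (k n : ℕ) (x : BitStr n) : ℕ :=
  if firstWeak k n x < n / k then k * firstWeak k n x + (k - 1) else n

lemma firstWeak_le (x : BitStr n) : firstWeak k n x ≤ n / k := by
  unfold firstWeak
  split
  · next h => exact le_of_lt (Nat.find_spec h).1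
  · exact le_refl _

lemma firstWeak_spec (x : BitStr n) (h : firstWeak k n x < n / k) :
    blockOnes k n x (firstWeak k n x) ≤ k - 2 := by
  by_cases hex : ∃ ℓ, ℓ < n / k ∧ blockOnes k n x ℓ ≤ k - 2
  · have hfw : firstWeak k n x = Nat.find hex := by unfold firstWeak; rw [dif_pos hex]
    rw [hfw]
    exact (Nat.find_spec hex).2
  · exfalso
    unfold firstWeak at h
    rw [dif_neg hex] at h
    exact lt_irrefl _ h

lemma firstWeak_min (x : BitStr n) {ℓ : ℕ} (h : ℓ < firstWeak k n x) (hℓ : ℓ < n / k) :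
    ¬ blockOnes k n x ℓ ≤ k - 2 := by
  intro hw
  have hex : ∃ ℓ, ℓ < n / k ∧ blockOnes k n x ℓ ≤ k - 2 := ⟨ℓ, hℓ, hw⟩
  have := Nat.find_min' hex ⟨hℓ, hw⟩
  unfold firstWeak at h
  rw [dif_pos hex] at h
  omega

lemma firstWeak_congr (x y : BitStr n)
    (h : ∀ ℓ, ℓ < n / k → (blockOnes k n x ℓ ≤ k - 2 ↔ blockOnes k n y ℓ ≤ k - 2)) :
    firstWeak k n x = firstWeak k n y := by
  classical
  have hP : (fun ℓ => ℓ < n / k ∧ blockOnes k n x ℓ ≤ k - 2)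
      = (fun ℓ => ℓ < n / k ∧ blockOnes k n y ℓ ≤ k - 2) := by
    funext ℓ
    by_cases hℓ : ℓ < n / k
    · simp only [hℓ, true_and]
      exact propext (h ℓ hℓ)
    · simp [hℓ]
  unfold firstWeak
  by_cases hex : ∃ ℓ, ℓ < n / k ∧ blockOnes k n x ℓ ≤ k - 2
  · have hey : ∃ ℓ, ℓ < n / k ∧ blockOnes k n y ℓ ≤ k - 2 := by rw [← hP]; exact hex
    rw [dif_pos hex, dif_pos hey]
    congr 1
  · have hey : ¬∃ ℓ, ℓ < n / k ∧ blockOnes k n y ℓ ≤ k - 2 := by rw [← hP]; exact hex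
    rw [dif_neg hex, dif_neg hey]

lemma lsVal_congr (x y : BitStr n)
    (h : ∀ ℓ, ℓ < n / k → (blockOnes k n x ℓ ≤ k - 2 ↔ blockOnes k n y ℓ ≤ k - 2)) :
    lsVal k n x = lsVal k n y := by
  unfold lsVal
  rw [firstWeak_congr x y h]

lemma firstWeak_allOnes (hdvd : k ∣ n) (hk : 2 ≤ k) : firstWeak k n (allOnes n) = n / k := by
  unfold firstWeak
  rw [dif_neg]
  rintro ⟨ℓ, hℓ, hw⟩
  have : blockOnes k n (allOnes n) ℓ = k := (allOnes_iff hdvd _).mp rfl ℓ hℓ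
  omega

lemma lsVal_allOnes (hdvd : k ∣ n) (hk : 2 ≤ k) : lsVal k n (allOnes n) = n := by
  unfold lsVal
  rw [firstWeak_allOnes hdvd hk, if_neg (lt_irrefl _)]

lemma lsVal_le (hdvd : k ∣ n) (hk : 2 ≤ k) (x : BitStr n) : lsVal k n x ≤ n := by
  unfold lsVal
  split
  · next h =>
    have h2 : k * (n / k) = n := Nat.mul_div_cancel' hdvd
    have : k * firstWeak k n x + k ≤ n := by
      calc k * firstWeak k n x + k = k * (firstWeak k n x + 1) := by ring
        _ ≤ k * (n / k) := Nat.mul_le_mul_left k (by omega)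
        _ = n := h2
    omega
  · exact le_refl _

lemma lsVal_lt_n_iff (hdvd : k ∣ n) (hk : 2 ≤ k) (x : BitStr n) :
    lsVal k n x < n ↔ firstWeak k n x < n / k := by
  unfold lsVal
  split
  · next h =>
    simp only [h, iff_true]
    have h2 : k * (n / k) = n := Nat.mul_div_cancel' hdvd
    have : k * firstWeak k n x + k ≤ n := by
      calc k * firstWeak k n x + k = k * (firstWeak k n x + 1) := by ring
        _ ≤ k * (n / k) := Nat.mul_le_mul_left k (by omega)
        _ = n := h2
    omega
  · next h => simp [h, lt_irrefl]

lemma lsVal_eq_n_iff (hdvd : k ∣ n) (hk : 2 ≤ k) (x : BitStr n) :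
    lsVal k n x = n ↔ firstWeak k n x = n / k := by
  have h1 := lsVal_lt_n_iff hdvd hk x
  have h2 := lsVal_le hdvd hk x
  have h3 := firstWeak_le (k := k) x
  constructor
  · intro h
    rcases Nat.lt_or_ge (firstWeak k n x) (n / k) with hc | hc
    · exfalso; rw [← h1] at hc; omega
    · omega
  · intro h
    unfold lsVal
    rw [h, if_neg (lt_irrefl _)]

end Lead
/-! ### Part 3: neighbours and local search -/

section Neighbors

variable {k n : ℕ}

lemma block_disjoint {b ℓ : ℕ} {i : Fin n} (hib : b * k ≤ i.1 ∧ i.1 < b * k + k)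
    (hne : ℓ ≠ b) : ¬(ℓ * k ≤ i.1 ∧ i.1 < ℓ * k + k) := by
  rintro ⟨h1, h2⟩
  rcases Nat.lt_or_ge ℓ b with h | h
  · have h3 : (ℓ + 1) * k ≤ b * k := Nat.mul_le_mul_right k h
    have h4 : (ℓ + 1) * k = ℓ * k + k := by ring
    omega
  · have h5 : ℓ ≠ b := hne
    have h6 : b < ℓ := by omega
    have h3 : (b + 1) * k ≤ ℓ * k := Nat.mul_le_mul_right k h6
    have h4 : (b + 1) * k = b * k + k := by ring
    omega

lemma mem_own_block (hdvd : k ∣ n) (hk0 : 0 < k) (i : Fin n) :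
    (i.1 / k) * k ≤ i.1 ∧ i.1 < (i.1 / k) * k + k ∧ i.1 / k < n / k := by
  refine ⟨Nat.div_mul_le_self _ _, ?_, Nat.div_lt_div_of_lt_of_dvd hdvd i.2⟩
  conv_lhs => rw [← Nat.div_add_mod i.1 k]
  rw [Nat.mul_comm k (i.1 / k)]
  exact Nat.add_lt_add_left (Nat.mod_lt _ hk0) _

lemma bo_pos_of_mem (x : BitStr n) {ℓ : ℕ} {i : Fin n}
    (hib : ℓ * k ≤ i.1 ∧ i.1 < ℓ * k + k) (hxi : x i = true) :
    1 ≤ blockOnes k n x ℓ := by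
  rw [blockOnes_eq_card]
  apply Finset.card_pos.mpr
  exact ⟨i, Finset.mem_filter.mpr ⟨by
    simp only [blockSet, Finset.mem_filter, Finset.mem_univ, true_and]; exact hib, hxi⟩⟩

lemma mem_nbhd_iff {x y : BitStr n} :
    y ∈ nbhd n x ↔ ∃ i : Fin n, y = Function.update x i (!x i) := by
  unfold nbhd
  simp only [Finset.mem_image, Finset.mem_univ, true_and]
  constructor
  · rintro ⟨i, h⟩; exact ⟨i, h.symm⟩
  · rintro ⟨i, h⟩; exact ⟨i, h.symm⟩

/-- Flip a one in the critical block. -/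
lemma dlb_flip_one_in_crit (hdvd : k ∣ n) (hk : 2 ≤ k) (x : BitStr n) (hx : x ≠ allOnes n)
    {i : Fin n} (hib : leadBlocks k n x * k ≤ i.1 ∧ i.1 < leadBlocks k n x * k + k)
    (hxi : x i = true) :
    dlb k n (Function.update x i false) = dlb k n x + 1 ∧
    Function.update x i false ≠ allOnes n ∧
    leadBlocks k n (Function.update x i false) = leadBlocks k n x ∧
    blockOnes k n (Function.update x i false) (leadBlocks k n x) + 1
      = blockOnes k n x (leadBlocks k n x) ∧
    (∀ ℓ, ℓ ≠ leadBlocks k n x →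
      blockOnes k n (Function.update x i false) ℓ = blockOnes k n x ℓ) := by
  obtain ⟨hc, hfull, hnf⟩ := leadBlocks_facts hdvd hk x hx
  set c := leadBlocks k n x with hcdef
  set y := Function.update x i false with hydef
  have hboc : blockOnes k n x c = blockOnes k n y c + 1 := blockOnes_update_false x i hib hxi
  have hother : ∀ ℓ, ℓ ≠ c → blockOnes k n y ℓ = blockOnes k n x ℓ :=
    fun ℓ hℓ => blockOnes_update_other x i false (block_disjoint hib hℓ)
  have hm_le : blockOnes k n x c ≤ k := blockOnes_le hdvd x hc
  have hyne : y ≠ allOnes n := by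
    intro hall
    have := (allOnes_iff hdvd y).mp hall c hc
    omega
  have hlead : leadBlocks k n y = c := by
    apply leadBlocks_eq_of y (le_of_lt hc)
    · intro ℓ hℓ; rw [hother ℓ (by omega)]; exact hfull ℓ hℓ
    · right; omega
  refine ⟨?_, hyne, hlead, by omega, hother⟩
  rw [dlb_eq_of hdvd hk y hyne, dlb_eq_of hdvd hk x hx, hlead, ← hcdef]
  omega

/-- Flip a zero in the critical block, not completing the block. -/
lemma dlb_flip_zero_in_crit_low (hdvd : k ∣ n) (hk : 2 ≤ k) (x : BitStr n) (hx : x ≠ allOnes n)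
    {i : Fin n} (hib : leadBlocks k n x * k ≤ i.1 ∧ i.1 < leadBlocks k n x * k + k)
    (hxi : x i = false)
    (hlow : blockOnes k n x (leadBlocks k n x) + 1 ≠ k) :
    dlb k n (Function.update x i true) ≤ dlb k n x := by
  obtain ⟨hc, hfull, hnf⟩ := leadBlocks_facts hdvd hk x hx
  set c := leadBlocks k n x with hcdef
  set y := Function.update x i true with hydef
  have hboc : blockOnes k n y c = blockOnes k n x c + 1 := blockOnes_update_true x i hib hxi
  have hother : ∀ ℓ, ℓ ≠ c → blockOnes k n y ℓ = blockOnes k n x ℓ :=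
    fun ℓ hℓ => blockOnes_update_other x i true (block_disjoint hib hℓ)
  have hm_le : blockOnes k n x c ≤ k := blockOnes_le hdvd x hc
  have hyne : y ≠ allOnes n := by
    intro hall
    have := (allOnes_iff hdvd y).mp hall c hc
    omega
  have hlead : leadBlocks k n y = c := by
    apply leadBlocks_eq_of y (le_of_lt hc)
    · intro ℓ hℓ; rw [hother ℓ (by omega)]; exact hfull ℓ hℓ
    · right; omega
  rw [dlb_eq_of hdvd hk y hyne, dlb_eq_of hdvd hk x hx, hlead, ← hcdef]
  omega

/-- Flip the unique zero in the critical block, completing it. -/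
lemma dlb_flip_zero_in_crit_full (hdvd : k ∣ n) (hk : 2 ≤ k) (x : BitStr n) (hx : x ≠ allOnes n)
    {i : Fin n} (hib : leadBlocks k n x * k ≤ i.1 ∧ i.1 < leadBlocks k n x * k + k)
    (hxi : x i = false)
    (hfullc : blockOnes k n x (leadBlocks k n x) + 1 = k) :
    k * (leadBlocks k n x + 1) ≤ dlb k n (Function.update x i true) ∧
    blockOnes k n (Function.update x i true) (leadBlocks k n x) = k ∧
    (∀ ℓ, ℓ ≠ leadBlocks k n x →
      blockOnes k n (Function.update x i true) ℓ = blockOnes k n x ℓ) := by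
  obtain ⟨hc, hfull, hnf⟩ := leadBlocks_facts hdvd hk x hx
  set c := leadBlocks k n x with hcdef
  set y := Function.update x i true with hydef
  have hboc : blockOnes k n y c = blockOnes k n x c + 1 := blockOnes_update_true x i hib hxi
  have hother : ∀ ℓ, ℓ ≠ c → blockOnes k n y ℓ = blockOnes k n x ℓ :=
    fun ℓ hℓ => blockOnes_update_other x i true (block_disjoint hib hℓ)
  have hbofull : blockOnes k n y c = k := by omega
  refine ⟨?_, hbofull, hother⟩
  by_cases hyall : y = allOnes n
  · rw [hyall, dlb, if_pos rfl]
    calc k * (c + 1) ≤ k * (n / k) := Nat.mul_le_mul_left k (by omega)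
      _ = n := Nat.mul_div_cancel' hdvd
  · have hlead : c + 1 ≤ leadBlocks k n y := by
      have : ∀ ℓ < c + 1, blockOnes k n y ℓ = k := by
        intro ℓ hℓ
        rcases Nat.lt_or_ge ℓ c with h | h
        · rw [hother ℓ (by omega)]; exact hfull ℓ h
        · have : ℓ = c := by omega
          rw [this]; exact hbofull
      unfold leadBlocks
      exact Nat.le_findGreatest (by omega) this
    rw [dlb_eq_of hdvd hk y hyall]
    calc k * (c + 1) ≤ k * leadBlocks k n y := Nat.mul_le_mul_left k hlead
      _ ≤ _ := Nat.le_add_right _ _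

/-- Flip a bit in an earlier (full) block. -/
lemma dlb_flip_in_full (hdvd : k ∣ n) (hk : 2 ≤ k) (x : BitStr n) (hx : x ≠ allOnes n)
    {b : ℕ} {i : Fin n} (hib : b * k ≤ i.1 ∧ i.1 < b * k + k)
    (hblt : b < leadBlocks k n x) (hxi : x i = true) :
    dlb k n (Function.update x i false) ≤ dlb k n x := by
  obtain ⟨hc, hfull, hnf⟩ := leadBlocks_facts hdvd hk x hx
  set c := leadBlocks k n x with hcdef
  set y := Function.update x i false with hydef
  have hboc : blockOnes k n x b = blockOnes k n y b + 1 := blockOnes_update_false x i hib hxi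
  have hother : ∀ ℓ, ℓ ≠ b → blockOnes k n y ℓ = blockOnes k n x ℓ :=
    fun ℓ hℓ => blockOnes_update_other x i false (block_disjoint hib hℓ)
  have hbfull : blockOnes k n x b = k := hfull b hblt
  have hyne : y ≠ allOnes n := by
    intro hall
    have := (allOnes_iff hdvd y).mp hall b (by omega)
    omega
  have hlead : leadBlocks k n y = b := by
    apply leadBlocks_eq_of y (by omega)
    · intro ℓ hℓ; rw [hother ℓ (by omega)]; exact hfull ℓ (by omega)
    · right; omega
  rw [dlb_eq_of hdvd hk y hyne, dlb_eq_of hdvd hk x hx, hlead, ← hcdef]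
  have h1 : k * (b + 1) ≤ k * c := Nat.mul_le_mul_left k (by omega)
  have h2 : k * (b + 1) = k * b + k := by ring
  omega

/-- Flip a bit in a block after the critical one. -/
lemma dlb_flip_after (hdvd : k ∣ n) (hk : 2 ≤ k) (x : BitStr n) (hx : x ≠ allOnes n)
    {b : ℕ} {i : Fin n} (hib : b * k ≤ i.1 ∧ i.1 < b * k + k)
    (hbgt : leadBlocks k n x < b) (bb : Bool) :
    dlb k n (Function.update x i bb) = dlb k n x := by
  obtain ⟨hc, hfull, hnf⟩ := leadBlocks_facts hdvd hk x hx
  set c := leadBlocks k n x with hcdef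
  set y := Function.update x i bb with hydef
  have hother : ∀ ℓ, ℓ ≠ b → blockOnes k n y ℓ = blockOnes k n x ℓ :=
    fun ℓ hℓ => blockOnes_update_other x i bb (block_disjoint hib hℓ)
  have hyne : y ≠ allOnes n := by
    intro hall
    have := (allOnes_iff hdvd y).mp hall c hc
    rw [hother c (by omega)] at this
    omega
  have hlead : leadBlocks k n y = c := by
    apply leadBlocks_eq_of y (le_of_lt hc)
    · intro ℓ hℓ; rw [hother ℓ (by omega)]; exact hfull ℓ hℓ
    · right; rw [hother c (by omega)]; omega
  rw [dlb_eq_of hdvd hk y hyne, dlb_eq_of hdvd hk x hx, hlead, ← hcdef,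
    hother c (by omega)]

lemma lsVal_congr_of (x y : BitStr n) (c : ℕ)
    (hother : ∀ ℓ, ℓ ≠ c → blockOnes k n y ℓ = blockOnes k n x ℓ)
    (hcc : blockOnes k n x c ≤ k - 2 ↔ blockOnes k n y c ≤ k - 2) :
    lsVal k n y = lsVal k n x := by
  apply lsVal_congr
  intro ℓ _
  by_cases hℓ : ℓ = c
  · subst hℓ; exact Iff.symm hcc
  · rw [hother ℓ hℓ]

end Neighbors

section LS

variable {k n : ℕ}

lemma firstWeak_eq_of (x : BitStr n) {c : ℕ} (hc : c < n / k)
    (hweak : blockOnes k n x c ≤ k - 2)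
    (hmin : ∀ ℓ < c, ¬ blockOnes k n x ℓ ≤ k - 2) : firstWeak k n x = c := by
  classical
  have hex : ∃ ℓ, ℓ < n / k ∧ blockOnes k n x ℓ ≤ k - 2 := ⟨c, hc, hweak⟩
  unfold firstWeak
  rw [dif_pos hex]
  apply le_antisymm (Nat.find_min' hex ⟨hc, hweak⟩)
  by_contra hlt
  push_neg at hlt
  have hspec := Nat.find_spec hex
  exact hmin _ hlt hspec.2

/-- The max-improvement neighbours: existence and characterisation. -/
lemma argmax_step (hdvd : k ∣ n) (hk : 2 ≤ k) (x : BitStr n) (hx : x ≠ allOnes n)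
    (hm : 1 ≤ blockOnes k n x (leadBlocks k n x)) :
    (∃ y ∈ nbhd n x, dlb k n x < dlb k n y) ∧
    ∀ y ∈ (nbhd n x).filter (fun y => ∀ z ∈ nbhd n x, dlb k n z ≤ dlb k n y),
      dlb k n x < dlb k n y ∧ lsVal k n y = lsVal k n x := by
  obtain ⟨hc, hfull, hnf⟩ := leadBlocks_facts hdvd hk x hx
  have hm_le : blockOnes k n x (leadBlocks k n x) ≤ k := blockOnes_le hdvd x hc
  obtain ⟨i1, hi1b, hi1x⟩ := exists_one_of_pos x hm
  have himp : ∃ y ∈ nbhd n x, dlb k n x < dlb k n y := by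
    refine ⟨Function.update x i1 false, mem_nbhd_iff.mpr ⟨i1, by rw [hi1x]; rfl⟩, ?_⟩
    have := (dlb_flip_one_in_crit hdvd hk x hx hi1b hi1x).1
    omega
  refine ⟨himp, ?_⟩
  intro y hy
  rw [Finset.mem_filter] at hy
  obtain ⟨hymem, hymax⟩ := hy
  obtain ⟨y1, hy1mem, hy1gt⟩ := himp
  have hgt : dlb k n x < dlb k n y := lt_of_lt_of_le hy1gt (hymax y1 hy1mem)
  refine ⟨hgt, ?_⟩
  obtain ⟨i, rfl⟩ := mem_nbhd_iff.mp hymem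
  obtain ⟨hib1, hib2, hblt⟩ := mem_own_block hdvd (by omega) i
  by_cases hbc : i.1 / k = leadBlocks k n x
  · rw [hbc] at hib1 hib2
    rcases Bool.eq_false_or_eq_true (x i) with hxi | hxi
    · -- flip one → zero in critical block
      simp only [hxi, Bool.not_true] at hymax hgt ⊢
      obtain ⟨hval, hyne, hlead, hbo, hother⟩ :=
        dlb_flip_one_in_crit hdvd hk x hx ⟨hib1, hib2⟩ hxi
      by_cases hcomp : blockOnes k n x (leadBlocks k n x) = k - 1
      · -- impossible: completing the block is strictly better
        exfalso
        obtain ⟨i0, hi0b, hi0x⟩ := exists_zero_of_notfull hdvd x hc hnf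
        have hz0 : Function.update x i0 true ∈ nbhd n x :=
          mem_nbhd_iff.mpr ⟨i0, by rw [hi0x]; rfl⟩
        obtain ⟨hval0, -, -⟩ :=
          dlb_flip_zero_in_crit_full hdvd hk x hx hi0b hi0x (by omega)
        have hle0 := hymax _ hz0
        have hdx : dlb k n x
            = k * leadBlocks k n x + (k - 1 - blockOnes k n x (leadBlocks k n x)) :=
          dlb_eq_of hdvd hk x hx
        have hkc : k * (leadBlocks k n x + 1) = k * leadBlocks k n x + k := by ring
        omega
      · -- ordinary improvement, the weak pattern is unchanged
        apply lsVal_congr_of _ _ (leadBlocks k n x) hother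
        constructor
        · intro h; omega
        · intro h; omega
    · -- flip zero → one in critical block
      simp only [hxi, Bool.not_false] at hymax hgt ⊢
      by_cases hcomp : blockOnes k n x (leadBlocks k n x) + 1 = k
      · -- completion
        obtain ⟨hval, hbofull, hother⟩ :=
          dlb_flip_zero_in_crit_full hdvd hk x hx ⟨hib1, hib2⟩ hxi hcomp
        apply lsVal_congr_of _ _ (leadBlocks k n x) hother
        constructor
        · intro h; omega
        · intro h; omega
      · exfalso
        have := dlb_flip_zero_in_crit_low hdvd hk x hx ⟨hib1, hib2⟩ hxi hcomp
        omega
  · rcases Nat.lt_or_ge (i.1 / k) (leadBlocks k n x) with hblt2 | hbge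
    · exfalso
      have hxi : x i = true :=
        full_forall hdvd x (by omega) (hfull _ hblt2) ⟨hib1, hib2⟩
      simp only [hxi, Bool.not_true] at hgt
      have := dlb_flip_in_full hdvd hk x hx ⟨hib1, hib2⟩ hblt2 hxi
      omega
    · exfalso
      have hbgt : leadBlocks k n x < i.1 / k := by omega
      have := dlb_flip_after hdvd hk x hx ⟨hib1, hib2⟩ hbgt (!x i)
      omega

lemma dlb_allOnes : dlb k n (allOnes n) = n := by rw [dlb, if_pos rfl]

lemma no_improve_allOnes (hdvd : k ∣ n) (hk : 2 ≤ k) :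
    ¬∃ y ∈ nbhd n (allOnes n), dlb k n (allOnes n) < dlb k n y := by
  rintro ⟨y, _, hgt⟩
  rw [dlb_allOnes] at hgt
  exact absurd (dlb_le_n hdvd hk y) (by omega)

lemma local_opt_crit_zero (hdvd : k ∣ n) (hk : 2 ≤ k) (x : BitStr n) (hx : x ≠ allOnes n)
    (hm : blockOnes k n x (leadBlocks k n x) = 0) :
    (¬∃ y ∈ nbhd n x, dlb k n x < dlb k n y) ∧ dlb k n x = lsVal k n x ∧ lsVal k n x < n := by
  obtain ⟨hc, hfull, hnf⟩ := leadBlocks_facts hdvd hk x hx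
  have hfw : firstWeak k n x = leadBlocks k n x := by
    apply firstWeak_eq_of x hc (by omega)
    intro ℓ hℓ
    have := hfull ℓ hℓ
    omega
  have hlsv : lsVal k n x = k * leadBlocks k n x + (k - 1) := by
    unfold lsVal
    rw [hfw, if_pos hc]
  constructor
  · rintro ⟨y, hymem, hgt⟩
    obtain ⟨i, rfl⟩ := mem_nbhd_iff.mp hymem
    obtain ⟨hib1, hib2, hblt⟩ := mem_own_block hdvd (by omega) i
    by_cases hbc : i.1 / k = leadBlocks k n x
    · rw [hbc] at hib1 hib2
      have hxi : x i = false := by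
        rcases Bool.eq_false_or_eq_true (x i) with h | h
        · exfalso
          have := bo_pos_of_mem x ⟨hib1, hib2⟩ h
          omega
        · exact h
      simp only [hxi, Bool.not_false] at hgt
      have := dlb_flip_zero_in_crit_low hdvd hk x hx ⟨hib1, hib2⟩ hxi (by omega)
      omega
    · rcases Nat.lt_or_ge (i.1 / k) (leadBlocks k n x) with hblt2 | hbge
      · have hxi : x i = true :=
          full_forall hdvd x (by omega) (hfull _ hblt2) ⟨hib1, hib2⟩
        simp only [hxi, Bool.not_true] at hgt
        have := dlb_flip_in_full hdvd hk x hx ⟨hib1, hib2⟩ hblt2 hxi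
        omega
      · have hbgt : leadBlocks k n x < i.1 / k := by omega
        have := dlb_flip_after hdvd hk x hx ⟨hib1, hib2⟩ hbgt (!x i)
        omega
  · constructor
    · rw [hlsv, dlb_eq_of hdvd hk x hx, hm]
      omega
    · rw [lsVal_lt_n_iff hdvd hk, hfw]
      exact hc

/-- Support of bounded-fuel local search. -/
lemma lsAux_support (hdvd : k ∣ n) (hk : 2 ≤ k) :
    ∀ fuel (x : BitStr n), n + 1 ≤ fuel + dlb k n x →
      ∀ z ∈ (lsAux n (dlb k n) fuel x).support,
        dlb k n z = lsVal k n x ∧ (z = allOnes n ↔ lsVal k n x = n) := by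
  intro fuel
  induction fuel with
  | zero =>
    intro x hfuel z hz
    exfalso
    have := dlb_le_n hdvd hk x
    simp only [Nat.zero_add] at hfuel
    omega
  | succ f ih =>
    intro x hfuel z hz
    by_cases hx : x = allOnes n
    · subst hx
      rw [lsAux, dif_neg (no_improve_allOnes hdvd hk)] at hz
      rw [PMF.support_pure] at hz
      rw [Set.mem_singleton_iff] at hz
      subst hz
      rw [lsVal_allOnes hdvd hk, dlb_allOnes]
      exact ⟨rfl, by simp⟩
    · by_cases hm : blockOnes k n x (leadBlocks k n x) = 0
      · obtain ⟨hno, heq, hlt⟩ := local_opt_crit_zero hdvd hk x hx hm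
        rw [lsAux, dif_neg hno] at hz
        rw [PMF.support_pure] at hz
        rw [Set.mem_singleton_iff] at hz
        subst hz
        refine ⟨heq, ?_⟩
        constructor
        · intro h; exact absurd h hx
        · intro h; omega
      · obtain ⟨himp, hmax⟩ := argmax_step hdvd hk x hx (by omega)
        rw [lsAux, dif_pos himp] at hz
        rw [PMF.support_bind] at hz
        rw [Set.mem_iUnion] at hz
        obtain ⟨y, hz⟩ := hz
        rw [Set.mem_iUnion] at hz
        obtain ⟨hy, hz⟩ := hz
        rw [PMF.support_uniformOfFinset, Finset.mem_coe] at hy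
        obtain ⟨hgt, hlsv⟩ := hmax y hy
        have := ih y (by omega) z hz
        rw [hlsv] at this
        exact this

lemma localSearch_support (hdvd : k ∣ n) (hk : 2 ≤ k) (x : BitStr n) :
    ∀ z ∈ (localSearch k n x).support,
      dlb k n z = lsVal k n x ∧ (z = allOnes n ↔ lsVal k n x = n) := by
  intro z hz
  exact lsAux_support hdvd hk (n + k + 1) x (by omega) z hz

end LS
/-! ### Part 4: lemmas for the drift argument -/

section Drift1

variable {k n : ℕ}

lemma firstWeak_gt (x : BitStr n) {c : ℕ} (hc : c < n / k)
    (h : ∀ ℓ ≤ c, ¬ blockOnes k n x ℓ ≤ k - 2) : c < firstWeak k n x := by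
  classical
  unfold firstWeak
  split
  · next hex =>
    rw [Nat.lt_find_iff]
    intro m hm hPm
    exact h m hm hPm.2
  · next => exact hc

lemma firstWeak_of_lsVal_eq (hdvd : k ∣ n) (hk : 2 ≤ k) (x y : BitStr n)
    (h : lsVal k n y = lsVal k n x) (hlt : lsVal k n x < n) :
    firstWeak k n y = firstWeak k n x := by
  have hx := (lsVal_lt_n_iff hdvd hk x).mp hlt
  have hlty : lsVal k n y < n := by omega
  have hy := (lsVal_lt_n_iff hdvd hk y).mp hlty
  have hxv : lsVal k n x = k * firstWeak k n x + (k - 1) := by unfold lsVal; rw [if_pos hx]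
  have hyv : lsVal k n y = k * firstWeak k n y + (k - 1) := by unfold lsVal; rw [if_pos hy]
  have h' : k * firstWeak k n y = k * firstWeak k n x := by omega
  exact Nat.eq_of_mul_eq_mul_left (by omega) h'

lemma upsingle_low (hdvd : k ∣ n) (hk : 2 ≤ k) (x : BitStr n)
    (hfw : firstWeak k n x < n / k)
    {i : Fin n} (hib : firstWeak k n x * k ≤ i.1 ∧ i.1 < firstWeak k n x * k + k)
    (hxi : x i = false)
    (hlow : blockOnes k n x (firstWeak k n x) + 1 ≤ k - 2) :
    lsVal k n (Function.update x i true) = lsVal k n x ∧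
    firstWeak k n (Function.update x i true) = firstWeak k n x ∧
    blockOnes k n (Function.update x i true) (firstWeak k n x)
      = blockOnes k n x (firstWeak k n x) + 1 := by
  have hboc : blockOnes k n (Function.update x i true) (firstWeak k n x)
      = blockOnes k n x (firstWeak k n x) + 1 := blockOnes_update_true x i hib hxi
  have hother : ∀ ℓ, ℓ ≠ firstWeak k n x →
      blockOnes k n (Function.update x i true) ℓ = blockOnes k n x ℓ :=
    fun ℓ hℓ => blockOnes_update_other x i true (block_disjoint hib hℓ)
  have hweak : blockOnes k n x (firstWeak k n x) ≤ k - 2 := firstWeak_spec x hfw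
  have hcong : firstWeak k n (Function.update x i true) = firstWeak k n x := by
    apply firstWeak_congr
    intro ℓ _
    by_cases hℓ : ℓ = firstWeak k n x
    · subst hℓ
      rw [hboc]
      constructor
      · intro _; omega
      · intro _; omega
    · rw [hother ℓ hℓ]
  refine ⟨?_, hcong, hboc⟩
  unfold lsVal
  rw [hcong]

lemma upsingle_high (hdvd : k ∣ n) (hk : 2 ≤ k) (x : BitStr n)
    (hfw : firstWeak k n x < n / k)
    {i : Fin n} (hib : firstWeak k n x * k ≤ i.1 ∧ i.1 < firstWeak k n x * k + k)
    (hxi : x i = false)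
    (hhigh : blockOnes k n x (firstWeak k n x) = k - 2) :
    lsVal k n x < lsVal k n (Function.update x i true) := by
  have hboc : blockOnes k n (Function.update x i true) (firstWeak k n x)
      = blockOnes k n x (firstWeak k n x) + 1 := blockOnes_update_true x i hib hxi
  have hother : ∀ ℓ, ℓ ≠ firstWeak k n x →
      blockOnes k n (Function.update x i true) ℓ = blockOnes k n x ℓ :=
    fun ℓ hℓ => blockOnes_update_other x i true (block_disjoint hib hℓ)
  have hgt : firstWeak k n x < firstWeak k n (Function.update x i true) := by
    apply firstWeak_gt _ hfw
    intro ℓ hℓ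
    rcases Nat.lt_or_ge ℓ (firstWeak k n x) with h | h
    · rw [hother ℓ (by omega)]
      exact firstWeak_min x h (by omega)
    · have : ℓ = firstWeak k n x := by omega
      subst this
      rw [hboc, hhigh]
      omega
  have hle := firstWeak_le (k := k) (n := n) (Function.update x i true)
  have hlsx : lsVal k n x = k * firstWeak k n x + (k - 1) := by
    unfold lsVal; rw [if_pos hfw]
  by_cases h : firstWeak k n (Function.update x i true) < n / k
  · have hy : lsVal k n (Function.update x i true)
        = k * firstWeak k n (Function.update x i true) + (k - 1) := by
      unfold lsVal; rw [if_pos h]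
    rw [hlsx, hy]
    have h1 : k * (firstWeak k n x + 1) ≤ k * firstWeak k n (Function.update x i true) :=
      Nat.mul_le_mul_left k (by omega)
    have h2 : k * (firstWeak k n x + 1) = k * firstWeak k n x + k := by ring
    omega
  · have hy : lsVal k n (Function.update x i true) = n := by
      unfold lsVal; rw [if_neg h]
    rw [hlsx, hy]
    have h2 : k * (n / k) = n := Nat.mul_div_cancel' hdvd
    have h3 : k * (firstWeak k n x + 1) ≤ k * (n / k) := Nat.mul_le_mul_left k (by omega)
    have h4 : k * (firstWeak k n x + 1) = k * firstWeak k n x + k := by ring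
    omega

/-- number of ones of `x` in block `c` that `y` destroys -/
def rSet (k n : ℕ) (x y : BitStr n) (c : ℕ) : Finset (Fin n) :=
  ((blockSet k n c).filter fun i => x i = true).filter fun i => y i = false

lemma bo_ge_sub (x y : BitStr n) (c : ℕ) :
    blockOnes k n x c ≤ blockOnes k n y c + (rSet k n x y c).card := by
  rw [blockOnes_eq_card, blockOnes_eq_card]
  have hsub : (blockSet k n c).filter (fun i => x i = true)
      ⊆ ((blockSet k n c).filter fun i => y i = true) ∪ rSet k n x y c := by
    intro i hi
    rw [Finset.mem_filter] at hi
    rcases Bool.eq_false_or_eq_true (y i) with h | h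
    · exact Finset.mem_union_left _ (Finset.mem_filter.mpr ⟨hi.1, h⟩)
    · exact Finset.mem_union_right _ (by
        unfold rSet
        rw [Finset.mem_filter]
        exact ⟨Finset.mem_filter.mpr hi, h⟩)
  calc ((blockSet k n c).filter fun i => x i = true).card
      ≤ (((blockSet k n c).filter fun i => y i = true) ∪ rSet k n x y c).card :=
        Finset.card_le_card hsub
    _ ≤ _ := Finset.card_union_le _ _

end Drift1
/-! ### Part 5: the numeric potential -/

section Numeric

def dN (k : ℕ) : ℕ → ℕ
  | 0 => 4
  | m + 1 => 4 + 4 * k * dN k m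

def uN (k m : ℕ) : ℕ := ∑ j ∈ Finset.Icc m (k - 2), dN k j

def AN (k n : ℕ) : ℕ := n * (uN k 0 + dN k (k - 2))

def gfN (k n : ℕ) (x : BitStr n) : ℕ :=
  AN k n * (n - 1 - lsVal k n x) + n * uN k (blockOnes k n x (firstWeak k n x))

def BN (k n : ℕ) : ℕ := AN k n * n + n * uN k 0

def gE (k n : ℕ) (s : (BitStr n × ℕ) × Bool) : ℝ≥0∞ :=
  if s.2 = true then 0 else (gfN k n s.1.1 : ℝ≥0∞)

variable {k n : ℕ}

lemma dN_pos (m : ℕ) : 0 < dN k m := by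
  cases m with
  | zero => norm_num [dN]
  | succ m => simp [dN]

lemma dN_mono (hk1 : 1 ≤ k) : Monotone (dN k) := by
  apply monotone_nat_of_le_succ
  intro m
  have h1 : 4 * 1 * dN k m ≤ 4 * k * dN k m := Nat.mul_le_mul_right _ (by omega)
  have h2 : dN k (m + 1) = 4 + 4 * k * dN k m := rfl
  have := dN_pos (k := k) m
  omega

lemma uN_anti {a b : ℕ} (h : a ≤ b) : uN k b ≤ uN k a :=
  Finset.sum_le_sum_of_subset (Finset.Icc_subset_Icc_left h)

lemma uN_split {m : ℕ} (hm : m ≤ k - 2) : uN k m = dN k m + uN k (m + 1) := by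
  unfold uN
  have hins : Finset.Icc m (k - 2) = insert m (Finset.Icc (m + 1) (k - 2)) := by
    ext j
    simp only [Finset.mem_Icc, Finset.mem_insert]
    omega
  rw [hins, Finset.sum_insert (by simp [Finset.mem_Icc])]

lemma uN_last : uN k (k - 2) = dN k (k - 2) := by
  unfold uN
  rw [Finset.Icc_self, Finset.sum_singleton]

lemma uN_sub_le (hk : 2 ≤ k) {m : ℕ} (hm : m ≤ k - 2) (r : ℕ) :
    uN k (m - r) ≤ uN k m + r * dN k (m - 1) := by
  induction r with
  | zero => simp
  | succ r ih =>
    rcases Nat.lt_or_ge r m with h | h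
    · have hsplit : uN k (m - (r + 1)) = dN k (m - (r + 1)) + uN k (m - r) := by
        have h1 : m - (r + 1) + 1 = m - r := by omega
        have := uN_split (k := k) (m := m - (r + 1)) (by omega)
        rw [h1] at this
        exact this
      have hd : dN k (m - (r + 1)) ≤ dN k (m - 1) := dN_mono (by omega) (by omega)
      calc uN k (m - (r + 1)) = dN k (m - (r + 1)) + uN k (m - r) := hsplit
        _ ≤ dN k (m - 1) + (uN k m + r * dN k (m - 1)) := by
            have := ih
            omega
        _ = uN k m + (r + 1) * dN k (m - 1) := by ring
    · have h1 : m - (r + 1) = m - r := by omega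
      rw [h1]
      calc uN k (m - r) ≤ uN k m + r * dN k (m - 1) := ih
        _ ≤ uN k m + (r + 1) * dN k (m - 1) := by
            have h2 : r * dN k (m - 1) ≤ (r + 1) * dN k (m - 1) :=
              Nat.mul_le_mul_right _ (by omega)
            omega

/-- The core numeric inequality for the drift. -/
lemma dN_key (hk : 2 ≤ k) {m : ℕ} (hm : m ≤ k - 2) :
    8 * (1 + m * dN k (m - 1)) ≤ (k - m) * dN k m := by
  cases m with
  | zero =>
    simp [dN]
    omega
  | succ m =>
    have hd : dN k (m + 1) = 4 + 4 * (k * dN k m) := by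
      show 4 + 4 * k * dN k m = _
      ring
    have h1 : (m + 1) * dN k m ≤ k * dN k m := Nat.mul_le_mul_right _ (by omega)
    have h2 : 2 * dN k (m + 1) ≤ (k - (m + 1)) * dN k (m + 1) :=
      Nat.mul_le_mul_right _ (by omega)
    have h3 : m + 1 - 1 = m := by omega
    rw [h3]
    have h4 : 8 * (1 + (m + 1) * dN k m) = 8 + 8 * ((m + 1) * dN k m) := by ring
    have h5 : 2 * dN k (m + 1) = 8 + 8 * (k * dN k m) := by rw [hd]; ring
    omega

/-- Global bound on `dN`. -/
lemma dN_le (hk : 2 ≤ k) (m : ℕ) : dN k m ≤ (8 * k) ^ (m + 1) := by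
  induction m with
  | zero => show 4 ≤ (8 * k) ^ 1; simp; omega
  | succ m ih =>
    show 4 + 4 * k * dN k m ≤ (8 * k) ^ (m + 1 + 1)
    rw [pow_succ]
    have h3 : 1 ≤ (8 * k) ^ (m + 1) := Nat.one_le_pow _ _ (by omega)
    have h2 : 4 * k * dN k m ≤ 4 * k * (8 * k) ^ (m + 1) := Nat.mul_le_mul_left _ ih
    have h4 : (8 * k) ^ (m + 1) * (8 * k)
        = 4 * k * (8 * k) ^ (m + 1) + 4 * k * (8 * k) ^ (m + 1) := by ring
    have h5 : 4 ≤ 4 * k * (8 * k) ^ (m + 1) := by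
      calc 4 = 4 * 1 * 1 := by norm_num
        _ ≤ 4 * k * (8 * k) ^ (m + 1) := Nat.mul_le_mul (Nat.mul_le_mul_left 4 (by omega)) h3
    omega

def CN (k : ℕ) : ℕ := 2 * k * (8 * k) ^ k

lemma BN_le (hk : 2 ≤ k) (hn : 0 < n) : BN k n ≤ n ^ 2 * CN k := by
  have hdle : dN k (k - 2) ≤ (8 * k) ^ (k - 1) := by
    calc dN k (k - 2) ≤ (8 * k) ^ (k - 2 + 1) := dN_le hk _
      _ ≤ (8 * k) ^ (k - 1) := Nat.pow_le_pow_right (by omega) (by omega)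
  have hule : uN k 0 ≤ (k - 1) * (8 * k) ^ (k - 1) := by
    unfold uN
    calc ∑ j ∈ Finset.Icc 0 (k - 2), dN k j
        ≤ ∑ j ∈ Finset.Icc 0 (k - 2), (8 * k) ^ (k - 1) := by
          apply Finset.sum_le_sum
          intro j hj
          rw [Finset.mem_Icc] at hj
          calc dN k j ≤ (8 * k) ^ (j + 1) := dN_le hk _
            _ ≤ (8 * k) ^ (k - 1) := Nat.pow_le_pow_right (by omega) (by omega)
      _ = (k - 2 + 1) * (8 * k) ^ (k - 1) := by
          rw [Finset.sum_const, Nat.card_Icc]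
          simp [Nat.smul_one_eq_cast]
      _ ≤ (k - 1) * (8 * k) ^ (k - 1) := Nat.mul_le_mul_right _ (by omega)
  have hsum : uN k 0 + dN k (k - 2) + uN k 0 ≤ CN k := by
    unfold CN
    have h1 : (k - 1) * (8 * k) ^ (k - 1) + (8 * k) ^ (k - 1) + (k - 1) * (8 * k) ^ (k - 1)
        ≤ 2 * k * (8 * k) ^ (k - 1) := by
      have : (k - 1) + 1 + (k - 1) ≤ 2 * k := by omega
      calc (k - 1) * (8 * k) ^ (k - 1) + (8 * k) ^ (k - 1) + (k - 1) * (8 * k) ^ (k - 1)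
          = ((k - 1) + 1 + (k - 1)) * (8 * k) ^ (k - 1) := by ring
        _ ≤ 2 * k * (8 * k) ^ (k - 1) := Nat.mul_le_mul_right _ this
    have h2 : 2 * k * (8 * k) ^ (k - 1) ≤ 2 * k * (8 * k) ^ k := by
      apply Nat.mul_le_mul_left
      exact Nat.pow_le_pow_right (by omega) (by omega)
    omega
  unfold BN AN
  have expand : n * (uN k 0 + dN k (k - 2)) * n + n * uN k 0
      ≤ n ^ 2 * (uN k 0 + dN k (k - 2) + uN k 0) := by
    have e1 : n ^ 2 * (uN k 0 + dN k (k - 2) + uN k 0)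
        = n * (uN k 0 + dN k (k - 2)) * n + n * n * uN k 0 := by ring
    have e2 : n * uN k 0 ≤ n * n * uN k 0 := by
      have h0 : n * 1 ≤ n * n := Nat.mul_le_mul_left _ (by omega)
      have h1 : n * 1 = n := by ring
      calc n * uN k 0 = n * 1 * uN k 0 := by rw [h1]
        _ ≤ n * n * uN k 0 := Nat.mul_le_mul_right _ h0
    omega
  calc n * (uN k 0 + dN k (k - 2)) * n + n * uN k 0
      ≤ n ^ 2 * (uN k 0 + dN k (k - 2) + uN k 0) := expand
    _ ≤ n ^ 2 * CN k := Nat.mul_le_mul_left _ hsum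

end Numeric
/-! ### Part 6: PMF expectation tools -/

section PMFTools

variable {α β : Type*}

lemma expect_bind (p : PMF α) (q : α → PMF β) (g : β → ℝ≥0∞) :
    ∑' b, (p.bind q) b * g b = ∑' a, p a * ∑' b, q a b * g b := by
  simp only [PMF.bind_apply]
  have h1 : ∀ b, (∑' a, p a * q a b) * g b = ∑' a, p a * q a b * g b := by
    intro b
    rw [ENNReal.tsum_mul_right]
  rw [tsum_congr h1, ENNReal.tsum_comm]
  apply tsum_congr
  intro a
  rw [← ENNReal.tsum_mul_left]
  apply tsum_congr
  intro b
  ring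

lemma expect_pure (a : α) (g : α → ℝ≥0∞) : ∑' b, (PMF.pure a) b * g b = g a := by
  rw [tsum_eq_single a]
  · simp [PMF.pure_apply]
  · intro b hb
    simp [PMF.pure_apply, hb]

lemma expect_map (p : PMF α) (f : α → β) (g : β → ℝ≥0∞) :
    ∑' b, (p.map f) b * g b = ∑' a, p a * g (f a) := by
  rw [PMF.map, expect_bind]
  exact tsum_congr fun a => by rw [Function.comp_apply, expect_pure]

lemma expect_const (p : PMF α) (g : α → ℝ≥0∞) (w : ℝ≥0∞)
    (h : ∀ a ∈ p.support, g a = w) : ∑' a, p a * g a = w := by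
  have h1 : ∀ a, p a * g a = p a * w := by
    intro a
    by_cases ha : p a = 0
    · rw [ha, zero_mul, zero_mul]
    · rw [h a (PMF.mem_support_iff _ _ |>.mpr ha)]
  rw [tsum_congr h1, ENNReal.tsum_mul_right, PMF.tsum_coe, one_mul]

lemma expect_mono (p : PMF α) (g h : α → ℝ≥0∞)
    (hle : ∀ a ∈ p.support, g a ≤ h a) : ∑' a, p a * g a ≤ ∑' a, p a * h a := by
  apply ENNReal.tsum_le_tsum
  intro a
  by_cases ha : p a = 0
  · simp [ha]
  · exact mul_le_mul_right (hle a (PMF.mem_support_iff _ _ |>.mpr ha)) _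

lemma expect_le_const (p : PMF α) (g : α → ℝ≥0∞) (w : ℝ≥0∞)
    (h : ∀ a ∈ p.support, g a ≤ w) : ∑' a, p a * g a ≤ w := by
  calc ∑' a, p a * g a ≤ ∑' a, p a * w := expect_mono p g (fun _ => w) h
    _ = w := by rw [ENNReal.tsum_mul_right, PMF.tsum_coe, one_mul]

end PMFTools

section Mutate

variable {n : ℕ}

lemma mutatePMF_apply (x y : BitStr n) :
    mutatePMF n x y = ∏ i, if y i = x i then 1 - (n : ℝ≥0∞)⁻¹ else (n : ℝ≥0∞)⁻¹ := by
  rw [mutatePMF, PMF.ofFintype_apply]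

lemma mutate_single (x : BitStr n) (i : Fin n) (b : Bool) (hb : b ≠ x i) :
    mutatePMF n x (Function.update x i b)
      = (n : ℝ≥0∞)⁻¹ * (1 - (n : ℝ≥0∞)⁻¹) ^ (n - 1) := by
  classical
  rw [mutatePMF_apply]
  rw [← Finset.mul_prod_erase Finset.univ _ (Finset.mem_univ i)]
  have h1 : (if Function.update x i b i = x i then 1 - (n:ℝ≥0∞)⁻¹ else (n:ℝ≥0∞)⁻¹)
      = (n:ℝ≥0∞)⁻¹ := by
    rw [Function.update_self, if_neg hb]
  rw [h1]
  congr 1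
  have h2 : ∀ j ∈ Finset.univ.erase i,
      (if Function.update x i b j = x j then 1 - (n:ℝ≥0∞)⁻¹ else (n:ℝ≥0∞)⁻¹)
        = 1 - (n:ℝ≥0∞)⁻¹ := fun j hj => by
    rw [Function.update_of_ne (Finset.ne_of_mem_erase hj), if_pos rfl]
  rw [Finset.prod_congr rfl h2, Finset.prod_const,
    Finset.card_erase_of_mem (Finset.mem_univ i), Finset.card_univ, Fintype.card_fin]

lemma mutate_marginal (hn : 0 < n) (x : BitStr n) (i : Fin n) (c : Bool → ℝ≥0∞) :
    ∑' y, mutatePMF n x y * c (y i)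
      = (1 - (n : ℝ≥0∞)⁻¹) * c (x i) + (n : ℝ≥0∞)⁻¹ * c (!x i) := by
  classical
  have hinv : (n : ℝ≥0∞)⁻¹ ≤ 1 := ENNReal.inv_le_one.mpr (by exact_mod_cast hn)
  rw [tsum_fintype]
  set F : Fin n → Bool → ℝ≥0∞ := fun j b =>
    (if b = x j then 1 - (n:ℝ≥0∞)⁻¹ else (n:ℝ≥0∞)⁻¹) * (if j = i then c b else 1)
    with hF
  have key : ∀ y : BitStr n, mutatePMF n x y * c (y i) = ∏ j, F j (y j) := by
    intro y
    have hA : mutatePMF n x y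
        = ∏ j, (if y j = x j then 1 - (n:ℝ≥0∞)⁻¹ else (n:ℝ≥0∞)⁻¹) := mutatePMF_apply x y
    have hB : c (y i) = ∏ j, (if j = i then c (y j) else 1) := by
      rw [Finset.prod_ite_eq' Finset.univ i (fun j => c (y j))]
      simp
    rw [hA, hB, ← Finset.prod_mul_distrib]
  rw [Finset.sum_congr rfl (fun y _ => key y), ← Fintype.prod_sum]
  have hjne : ∀ j ∈ Finset.univ, j ≠ i → (∑ b : Bool, F j b) = 1 := by
    intro j _ hj
    rw [hF]
    simp only [if_neg hj, mul_one]
    rcases Bool.eq_false_or_eq_true (x j) with hx | hx <;>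
      simp [Fintype.sum_bool, hx, tsub_add_cancel_of_le hinv, add_tsub_cancel_of_le hinv]
  rw [Finset.prod_eq_single i hjne (fun h => absurd (Finset.mem_univ i) h)]
  rw [hF]
  simp only [if_pos rfl]
  rcases Bool.eq_false_or_eq_true (x i) with hx | hx <;>
    simp [Fintype.sum_bool, hx, add_comm]

lemma real_pow_bound {n : ℕ} (hn : 2 ≤ n) : (8 : ℝ)⁻¹ ≤ (1 - (n : ℝ)⁻¹) ^ (n - 1) := by
  have hn2 : (2 : ℝ) ≤ (n : ℝ) := by exact_mod_cast hn
  set t : ℝ := (n : ℝ) - 1 with ht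
  have ht0 : 0 < t := by simp only [ht]; linarith
  have hbase : (1 : ℝ) - (n:ℝ)⁻¹ = (1 + t⁻¹)⁻¹ := by
    have hne : (n : ℝ) ≠ 0 := by linarith
    have htne : t ≠ 0 := ne_of_gt ht0
    rw [ht]
    field_simp
    have hp : (0:ℝ) < (n:ℝ) - 1 := by linarith
    rw [eq_div_iff (by positivity)]
    field_simp
    ring
  have hpos : (0:ℝ) ≤ 1 + t⁻¹ := by positivity
  have hexp : 1 + t⁻¹ ≤ Real.exp t⁻¹ := by
    have := Real.add_one_le_exp t⁻¹
    linarith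
  have hpow : (1 + t⁻¹) ^ (n - 1) ≤ (8 : ℝ) := by
    calc (1 + t⁻¹) ^ (n - 1) ≤ (Real.exp t⁻¹) ^ (n - 1) := pow_le_pow_left₀ hpos hexp _
      _ = Real.exp ((n - 1 : ℕ) * t⁻¹) := (Real.exp_nat_mul _ _).symm
      _ = Real.exp 1 := by
          congr 1
          have hcast : ((n - 1 : ℕ) : ℝ) = t := by
            rw [ht, Nat.cast_sub (by omega)]
            simp
          rw [hcast, mul_inv_cancel₀ (ne_of_gt ht0)]
      _ ≤ 8 := le_of_lt (lt_trans Real.exp_one_lt_d9 (by norm_num))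
  rw [hbase, inv_pow]
  exact inv_anti₀ (by positivity) hpow

lemma ennreal_pow_bound {n : ℕ} (hn : 2 ≤ n) :
    (8 : ℝ≥0∞)⁻¹ ≤ (1 - (n : ℝ≥0∞)⁻¹) ^ (n - 1) := by
  have hn0 : (0:ℝ) < (n:ℝ) := by
    have : (2:ℝ) ≤ (n:ℝ) := by exact_mod_cast hn
    linarith
  have h1 : (n : ℝ≥0∞)⁻¹ = ENNReal.ofReal (n:ℝ)⁻¹ := by
    rw [ENNReal.ofReal_inv_of_pos hn0, ENNReal.ofReal_natCast]
  have h2 : (1 : ℝ≥0∞) - (n:ℝ≥0∞)⁻¹ = ENNReal.ofReal (1 - (n:ℝ)⁻¹) := by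
    rw [ENNReal.ofReal_sub 1 (by positivity), ENNReal.ofReal_one, h1]
  have h3 : (8:ℝ≥0∞)⁻¹ = ENNReal.ofReal (8:ℝ)⁻¹ := by
    rw [ENNReal.ofReal_inv_of_pos (by norm_num)]
    norm_num
  have hn2 : (2:ℝ) ≤ (n:ℝ) := by exact_mod_cast hn
  have h4 : (n:ℝ)⁻¹ ≤ 1 := by
    calc (n:ℝ)⁻¹ ≤ 1⁻¹ := inv_anti₀ one_pos (by linarith)
      _ = 1 := inv_one
  rw [h2, ← ENNReal.ofReal_pow (by linarith), h3]
  exact ENNReal.ofReal_le_ofReal (real_pow_bound hn)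

end Mutate
/-! ### Part 7: master inequality -/

section Master

variable {k n : ℕ}

/-- The value of `gE` after one mutation to `y`, as a natural number. -/
def GvalN (k n : ℕ) (x y : BitStr n) : ℕ :=
  if lsVal k n y = n then 0
  else if lsVal k n x ≤ lsVal k n y then gfN k n y else gfN k n x

/-- The set of mutations that add a single one to the critical block. -/
def UpF (k n : ℕ) (x : BitStr n) : Finset (BitStr n) :=
  (((blockSet k n (firstWeak k n x)).filter fun i => x i = false)).image
    fun i => Function.update x i true

lemma card_UpF (hdvd : k ∣ n) (x : BitStr n) (hcq : firstWeak k n x < n / k) :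
    (UpF k n x).card = k - blockOnes k n x (firstWeak k n x) := by
  classical
  unfold UpF
  rw [Finset.card_image_of_injOn, ]
  · have hsplit := Finset.card_filter_add_card_filter_not
      (s := blockSet k n (firstWeak k n x)) (fun i => x i = true)
    have hcongr : (blockSet k n (firstWeak k n x)).filter (fun i => x i = false)
        = (blockSet k n (firstWeak k n x)).filter (fun i => ¬ (x i = true)) := by
      apply Finset.filter_congr
      intro i _
      rcases Bool.eq_false_or_eq_true (x i) with h | h <;> simp [h]
    rw [hcongr]
    have hbo : blockOnes k n x (firstWeak k n x)
        = ((blockSet k n (firstWeak k n x)).filter fun i => x i = true).card :=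
      blockOnes_eq_card x _
    have hcard := card_blockSet (n := n) hdvd hcq
    omega
  · intro a ha b hb hab
    simp only [Finset.coe_filter, Set.mem_setOf_eq] at ha hb
    by_contra hne
    have h1 := congrFun hab a
    dsimp only at h1
    rw [Function.update_self, Function.update_of_ne hne] at h1
    rw [ha.2] at h1
    exact Bool.noConfusion h1

lemma mem_UpF_iff (x y : BitStr n) :
    y ∈ UpF k n x ↔ ∃ i : Fin n,
      (firstWeak k n x * k ≤ i.1 ∧ i.1 < firstWeak k n x * k + k) ∧ x i = false ∧
        y = Function.update x i true := by
  unfold UpF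
  rw [Finset.mem_image]
  constructor
  · rintro ⟨i, hi, rfl⟩
    rw [Finset.mem_filter] at hi
    have hi1 := hi.1
    simp only [blockSet, Finset.mem_filter, Finset.mem_univ, true_and] at hi1
    exact ⟨i, hi1, hi.2, rfl⟩
  · rintro ⟨i, hib, hxi, rfl⟩
    refine ⟨i, Finset.mem_filter.mpr ⟨?_, hxi⟩, rfl⟩
    simp only [blockSet, Finset.mem_filter, Finset.mem_univ, true_and]
    exact hib

/-- The master pointwise inequality. -/
lemma master_bound (hdvd : k ∣ n) (hk : 2 ≤ k) (x : BitStr n)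
    (hvlt : lsVal k n x < n) (y : BitStr n) :
    GvalN k n x y
      + n * dN k (blockOnes k n x (firstWeak k n x)) * (if y ∈ UpF k n x then 1 else 0)
    ≤ gfN k n x
      + n * dN k (blockOnes k n x (firstWeak k n x) - 1)
          * (rSet k n x y (firstWeak k n x)).card := by
  classical
  have hcq : firstWeak k n x < n / k := (lsVal_lt_n_iff hdvd hk x).mp hvlt
  have hm2 : blockOnes k n x (firstWeak k n x) ≤ k - 2 := firstWeak_spec x hcq
  have hlsx : lsVal k n x = k * firstWeak k n x + (k - 1) := by
    unfold lsVal; rw [if_pos hcq]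
  by_cases hyUp : y ∈ UpF k n x
  · obtain ⟨i, hib, hxi, rfl⟩ := mem_UpF_iff x y |>.mp hyUp
    rw [if_pos hyUp]
    -- no ones are destroyed
    have hr0 : (rSet k n x (Function.update x i true) (firstWeak k n x)).card = 0 := by
      rw [Finset.card_eq_zero, Finset.eq_empty_iff_forall_notMem]
      intro j hj
      unfold rSet at hj
      rw [Finset.mem_filter, Finset.mem_filter] at hj
      obtain ⟨⟨_, hxj⟩, hyj⟩ := hj
      have hji : j ≠ i := fun h => by rw [h, hxi] at hxj; exact Bool.false_ne_true hxj
      rw [Function.update_of_ne hji, hxj] at hyj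
      exact Bool.noConfusion hyj
    rw [hr0]
    by_cases hml : blockOnes k n x (firstWeak k n x) + 1 ≤ k - 2
    · obtain ⟨hls, hfwy, hbo⟩ := upsingle_low hdvd hk x hcq hib hxi hml
      have hGv : GvalN k n x (Function.update x i true) = gfN k n (Function.update x i true) := by
        unfold GvalN
        rw [if_neg (by omega), if_pos (by omega)]
      have hgoal : gfN k n (Function.update x i true)
          + n * dN k (blockOnes k n x (firstWeak k n x)) = gfN k n x := by
        unfold gfN
        rw [hls, hfwy, hbo, uN_split (k := k) hm2]
        ring
      rw [hGv]
      omega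
    · have hm2e : blockOnes k n x (firstWeak k n x) = k - 2 := by omega
      have hhigh := upsingle_high hdvd hk x hcq hib hxi hm2e
      have hun : uN k (blockOnes k n x (firstWeak k n x))
          = dN k (blockOnes k n x (firstWeak k n x)) := by
        rw [hm2e]; exact uN_last
      by_cases hyn : lsVal k n (Function.update x i true) = n
      · have hGv : GvalN k n x (Function.update x i true) = 0 := by
          unfold GvalN; rw [if_pos hyn]
        rw [hGv]
        have hge : n * uN k (blockOnes k n x (firstWeak k n x)) ≤ gfN k n x := by
          unfold gfN; omega
        have hun' : n * uN k (blockOnes k n x (firstWeak k n x))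
            = n * dN k (blockOnes k n x (firstWeak k n x)) := by rw [hun]
        omega
      · have hGv : GvalN k n x (Function.update x i true)
            = gfN k n (Function.update x i true) := by
          unfold GvalN; rw [if_neg hyn, if_pos (by omega)]
        rw [hGv]
        have hyub := lsVal_le hdvd hk (Function.update x i true)
        have h1 : AN k n * (n - 1 - lsVal k n (Function.update x i true))
            ≤ AN k n * (n - 2 - lsVal k n x) := Nat.mul_le_mul_left _ (by omega)
        have h2 : n * uN k (blockOnes k n (Function.update x i true)
              (firstWeak k n (Function.update x i true)))
            ≤ n * uN k 0 := Nat.mul_le_mul_left _ (uN_anti (Nat.zero_le _))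
        have h3 : AN k n = n * uN k 0 + n * dN k (k - 2) := by
          unfold AN; ring
        have h4 : AN k n * (n - 2 - lsVal k n x) + AN k n
            = AN k n * (n - 1 - lsVal k n x) := by
          have he : (n - 2 - lsVal k n x) + 1 = n - 1 - lsVal k n x := by omega
          rw [← he, Nat.mul_succ]
        unfold gfN
        rw [hun, hm2e]
        omega
  · rw [if_neg hyUp]
    rcases lt_trichotomy (lsVal k n y) (lsVal k n x) with hlt | heq | hgt
    · have hGv : GvalN k n x y = gfN k n x := by
        unfold GvalN
        rw [if_neg (by omega), if_neg (by omega)]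
      rw [hGv]
      omega
    · have hGv : GvalN k n x y = gfN k n y := by
        unfold GvalN
        rw [if_neg (by omega), if_pos (by omega)]
      rw [hGv]
      have hfwy : firstWeak k n y = firstWeak k n x :=
        firstWeak_of_lsVal_eq hdvd hk x y heq hvlt
      have hbos := bo_ge_sub (k := k) x y (firstWeak k n x)
      have hu1 : uN k (blockOnes k n y (firstWeak k n x))
          ≤ uN k (blockOnes k n x (firstWeak k n x) - (rSet k n x y (firstWeak k n x)).card) :=
        uN_anti (by omega)
      have hu2 := uN_sub_le (k := k) hk hm2 (rSet k n x y (firstWeak k n x)).card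
      have hmul : n * uN k (blockOnes k n y (firstWeak k n x))
          ≤ n * (uN k (blockOnes k n x (firstWeak k n x))
            + (rSet k n x y (firstWeak k n x)).card
              * dN k (blockOnes k n x (firstWeak k n x) - 1)) :=
        Nat.mul_le_mul_left _ (by omega)
      have hdist : n * (uN k (blockOnes k n x (firstWeak k n x))
            + (rSet k n x y (firstWeak k n x)).card
              * dN k (blockOnes k n x (firstWeak k n x) - 1))
          = n * uN k (blockOnes k n x (firstWeak k n x))
            + n * dN k (blockOnes k n x (firstWeak k n x) - 1)
              * (rSet k n x y (firstWeak k n x)).card := by ring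
      unfold gfN
      rw [heq, hfwy]
      omega
    · by_cases hyn : lsVal k n y = n
      · have hGv : GvalN k n x y = 0 := by unfold GvalN; rw [if_pos hyn]
        rw [hGv]
        omega
      · have hGv : GvalN k n x y = gfN k n y := by
          unfold GvalN; rw [if_neg hyn, if_pos (by omega)]
        rw [hGv]
        have hyub := lsVal_le hdvd hk y
        have h1 : AN k n * (n - 1 - lsVal k n y)
            ≤ AN k n * (n - 2 - lsVal k n x) := Nat.mul_le_mul_left _ (by omega)
        have h2 : n * uN k (blockOnes k n y (firstWeak k n y)) ≤ n * uN k 0 :=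
          Nat.mul_le_mul_left _ (uN_anti (Nat.zero_le _))
        have h3 : AN k n = n * uN k 0 + n * dN k (k - 2) := by unfold AN; ring
        have h4 : AN k n * (n - 2 - lsVal k n x) + AN k n
            = AN k n * (n - 1 - lsVal k n x) := by
          have he : (n - 2 - lsVal k n x) + 1 = n - 1 - lsVal k n x := by omega
          rw [← he, Nat.mul_succ]
        unfold gfN
        omega

end Master
/-! ### Part 8: the drift step -/

section DriftStep

variable {k n : ℕ}

lemma baldwinStep_eq (x : BitStr n) (v : ℕ) :
    baldwinStep k n ((x, v), false)
      = (mutatePMF n x).bind fun y => (localSearch k n y).map fun z =>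
          (if v ≤ dlb k n z then (y, dlb k n z) else (x, v),
           if false = true ∨ y = allOnes n ∨ z = allOnes n then true else false) := rfl

lemma inner_expect (hdvd : k ∣ n) (hk : 2 ≤ k) (x : BitStr n) (v : ℕ)
    (hv : v = lsVal k n x) (y : BitStr n) :
    ∑' z, localSearch k n y z * gE k n
        (if v ≤ dlb k n z then (y, dlb k n z) else (x, v),
         if false = true ∨ y = allOnes n ∨ z = allOnes n then true else false)
      = (GvalN k n x y : ℝ≥0∞) := by
  apply _root_.expect_const
  intro z hz
  obtain ⟨hdz, hiff⟩ := localSearch_support hdvd hk y z hz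
  by_cases hyn : lsVal k n y = n
  · have hz1 : z = allOnes n := hiff.mpr hyn
    have hcond : ((false = true) ∨ y = allOnes n ∨ z = allOnes n) := Or.inr (Or.inr hz1)
    rw [if_pos hcond]
    unfold GvalN
    rw [if_pos hyn]
    simp [gE]
  · have hz1 : z ≠ allOnes n := fun h => hyn (hiff.mp h)
    have hy1 : y ≠ allOnes n := fun h => hyn (by rw [h]; exact lsVal_allOnes hdvd hk)
    have hcond : ¬((false = true) ∨ y = allOnes n ∨ z = allOnes n) := by
      simp [hy1, hz1]
    rw [if_neg hcond, hdz, hv]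
    unfold GvalN
    rw [if_neg hyn]
    by_cases hacc : lsVal k n x ≤ lsVal k n y
    · rw [if_pos hacc, if_pos hacc]
      simp [gE]
    · rw [if_neg hacc, if_neg hacc]
      simp [gE]

lemma drift_step (hdvd : k ∣ n) (hk : 2 ≤ k) (hn2 : 2 ≤ n) (x : BitStr n) (v : ℕ)
    (hv : v = lsVal k n x) (hvlt : lsVal k n x < n) :
    1 + ∑' s', baldwinStep k n ((x, v), false) s' * gE k n s' ≤ (gfN k n x : ℝ≥0∞) := by
  classical
  have hn0 : 0 < n := by omega
  have hcq : firstWeak k n x < n / k := (lsVal_lt_n_iff hdvd hk x).mp hvlt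
  have hm2 : blockOnes k n x (firstWeak k n x) ≤ k - 2 := firstWeak_spec x hcq
  -- step expectation in terms of GvalN
  have hstepval : ∑' s', baldwinStep k n ((x, v), false) s' * gE k n s'
      = ∑' y, mutatePMF n x y * (GvalN k n x y : ℝ≥0∞) := by
    rw [baldwinStep_eq, expect_bind]
    exact tsum_congr fun y => by
      rw [expect_map]
      exact congrArg _ (inner_expect hdvd hk x v hv y)
  -- probability of the up-moves
  have hup : ∑' y, mutatePMF n x y * (if y ∈ UpF k n x then 1 else 0)
      = ((k - blockOnes k n x (firstWeak k n x) : ℕ) : ℝ≥0∞)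
          * ((n:ℝ≥0∞)⁻¹ * (1 - (n:ℝ≥0∞)⁻¹) ^ (n-1)) := by
    have h1 : ∀ y ∉ UpF k n x,
        mutatePMF n x y * (if y ∈ UpF k n x then (1:ℝ≥0∞) else 0) = 0 := by
      intro y hy
      rw [if_neg hy, mul_zero]
    rw [tsum_eq_sum h1]
    have h2 : ∀ y ∈ UpF k n x, mutatePMF n x y * (if y ∈ UpF k n x then (1:ℝ≥0∞) else 0)
        = (n:ℝ≥0∞)⁻¹ * (1 - (n:ℝ≥0∞)⁻¹) ^ (n-1) := by
      intro y hy
      rw [if_pos hy, mul_one]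
      obtain ⟨i, hib, hxi, rfl⟩ := (mem_UpF_iff x y).mp hy
      exact mutate_single x i true (by simp [hxi])
    rw [Finset.sum_congr rfl h2, Finset.sum_const, card_UpF hdvd x hcq, nsmul_eq_mul]
  -- expected number of destroyed ones
  have hr : ∑' y, mutatePMF n x y * ((rSet k n x y (firstWeak k n x)).card : ℝ≥0∞)
      = (blockOnes k n x (firstWeak k n x) : ℝ≥0∞) * (n:ℝ≥0∞)⁻¹ := by
    have hcard : ∀ y : BitStr n, ((rSet k n x y (firstWeak k n x)).card : ℝ≥0∞)
        = ∑ i ∈ (blockSet k n (firstWeak k n x)).filter (fun i => x i = true),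
            (if y i = false then (1:ℝ≥0∞) else 0) := by
      intro y
      unfold rSet
      rw [Finset.card_filter]
      push_cast
      apply Finset.sum_congr rfl
      intro i _
      by_cases h : y i = false <;> simp [h]
    calc ∑' y, mutatePMF n x y * ((rSet k n x y (firstWeak k n x)).card : ℝ≥0∞)
        = ∑ y : BitStr n, ∑ i ∈ (blockSet k n (firstWeak k n x)).filter (fun i => x i = true),
            mutatePMF n x y * (if y i = false then (1:ℝ≥0∞) else 0) := by
          rw [tsum_fintype]
          apply Finset.sum_congr rfl
          intro y _
          rw [hcard y, Finset.mul_sum]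
      _ = ∑ i ∈ (blockSet k n (firstWeak k n x)).filter (fun i => x i = true),
            ∑ y : BitStr n, mutatePMF n x y * (if y i = false then (1:ℝ≥0∞) else 0) :=
          Finset.sum_comm
      _ = ∑ i ∈ (blockSet k n (firstWeak k n x)).filter (fun i => x i = true), (n:ℝ≥0∞)⁻¹ := by
          apply Finset.sum_congr rfl
          intro i hi
          rw [Finset.mem_filter] at hi
          have hxi : x i = true := hi.2
          rw [← tsum_fintype (L := SummationFilter.unconditional _)]
          rw [mutate_marginal hn0 x i (fun b => if b = false then (1:ℝ≥0∞) else 0)]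
          rw [hxi]
          simp
      _ = (blockOnes k n x (firstWeak k n x) : ℝ≥0∞) * (n:ℝ≥0∞)⁻¹ := by
          rw [Finset.sum_const, nsmul_eq_mul]
          congr 2
          exact (blockOnes_eq_card x _).symm
  -- cast master bound
  have hmaster : ∀ y : BitStr n, (GvalN k n x y : ℝ≥0∞)
      + (n:ℝ≥0∞) * (dN k (blockOnes k n x (firstWeak k n x)) : ℝ≥0∞)
          * (if y ∈ UpF k n x then 1 else 0)
      ≤ (gfN k n x : ℝ≥0∞)
        + (n:ℝ≥0∞) * (dN k (blockOnes k n x (firstWeak k n x) - 1) : ℝ≥0∞)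
            * ((rSet k n x y (firstWeak k n x)).card : ℝ≥0∞) := by
    intro y
    have hb := master_bound hdvd hk x hvlt y
    have hcast1 : (if y ∈ UpF k n x then (1:ℝ≥0∞) else 0)
        = ((if y ∈ UpF k n x then 1 else 0 : ℕ) : ℝ≥0∞) := by
      by_cases h : y ∈ UpF k n x <;> simp [h]
    rw [hcast1]
    exact_mod_cast hb
  -- sum the master bound
  have hsum : (∑' y, mutatePMF n x y * (GvalN k n x y : ℝ≥0∞))
      + (n:ℝ≥0∞) * (dN k (blockOnes k n x (firstWeak k n x)) : ℝ≥0∞)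
        * (((k - blockOnes k n x (firstWeak k n x) : ℕ) : ℝ≥0∞)
          * ((n:ℝ≥0∞)⁻¹ * (1 - (n:ℝ≥0∞)⁻¹) ^ (n-1)))
      ≤ (gfN k n x : ℝ≥0∞)
        + (n:ℝ≥0∞) * (dN k (blockOnes k n x (firstWeak k n x) - 1) : ℝ≥0∞)
          * ((blockOnes k n x (firstWeak k n x) : ℝ≥0∞) * (n:ℝ≥0∞)⁻¹) := by
    have hL : ∑' y, mutatePMF n x y * ((GvalN k n x y : ℝ≥0∞)
        + (n:ℝ≥0∞) * (dN k (blockOnes k n x (firstWeak k n x)) : ℝ≥0∞)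
            * (if y ∈ UpF k n x then 1 else 0))
        = (∑' y, mutatePMF n x y * (GvalN k n x y : ℝ≥0∞))
          + (n:ℝ≥0∞) * (dN k (blockOnes k n x (firstWeak k n x)) : ℝ≥0∞)
            * (((k - blockOnes k n x (firstWeak k n x) : ℕ) : ℝ≥0∞)
              * ((n:ℝ≥0∞)⁻¹ * (1 - (n:ℝ≥0∞)⁻¹) ^ (n-1))) := by
      rw [tsum_congr (fun y => mul_add (mutatePMF n x y) _ _), ENNReal.tsum_add]
      congr 1
      rw [tsum_congr (fun y => mul_left_comm (mutatePMF n x y) _ _), ENNReal.tsum_mul_left,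
        hup]
    have hR : ∑' y, mutatePMF n x y * ((gfN k n x : ℝ≥0∞)
        + (n:ℝ≥0∞) * (dN k (blockOnes k n x (firstWeak k n x) - 1) : ℝ≥0∞)
            * ((rSet k n x y (firstWeak k n x)).card : ℝ≥0∞))
        = (gfN k n x : ℝ≥0∞)
          + (n:ℝ≥0∞) * (dN k (blockOnes k n x (firstWeak k n x) - 1) : ℝ≥0∞)
            * ((blockOnes k n x (firstWeak k n x) : ℝ≥0∞) * (n:ℝ≥0∞)⁻¹) := by
      rw [tsum_congr (fun y => mul_add (mutatePMF n x y) _ _), ENNReal.tsum_add]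
      congr 1
      · rw [ENNReal.tsum_mul_right, PMF.tsum_coe, one_mul]
      · rw [tsum_congr (fun y => mul_left_comm (mutatePMF n x y) _ _), ENNReal.tsum_mul_left,
          hr]
    rw [← hL, ← hR]
    exact ENNReal.tsum_le_tsum fun y => mul_le_mul_right (hmaster y) _
  -- the numeric comparison
  have hnn : (n:ℝ≥0∞) * (n:ℝ≥0∞)⁻¹ = 1 :=
    ENNReal.mul_inv_cancel (by exact_mod_cast hn0.ne') (ENNReal.natCast_ne_top n)
  have h8 : (8:ℝ≥0∞) ≠ 0 := by norm_num
  have h8' : (8:ℝ≥0∞) ≠ ⊤ := by norm_num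
  have hnum : (1:ℝ≥0∞)
      + (n:ℝ≥0∞) * (dN k (blockOnes k n x (firstWeak k n x) - 1) : ℝ≥0∞)
        * ((blockOnes k n x (firstWeak k n x) : ℝ≥0∞) * (n:ℝ≥0∞)⁻¹)
      ≤ (n:ℝ≥0∞) * (dN k (blockOnes k n x (firstWeak k n x)) : ℝ≥0∞)
        * (((k - blockOnes k n x (firstWeak k n x) : ℕ) : ℝ≥0∞)
          * ((n:ℝ≥0∞)⁻¹ * (1 - (n:ℝ≥0∞)⁻¹) ^ (n-1))) := by
    have e1 : (n:ℝ≥0∞) * (dN k (blockOnes k n x (firstWeak k n x) - 1) : ℝ≥0∞)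
        * ((blockOnes k n x (firstWeak k n x) : ℝ≥0∞) * (n:ℝ≥0∞)⁻¹)
        = ((n:ℝ≥0∞) * (n:ℝ≥0∞)⁻¹)
          * ((blockOnes k n x (firstWeak k n x) : ℝ≥0∞)
            * (dN k (blockOnes k n x (firstWeak k n x) - 1) : ℝ≥0∞)) := by ring
    have e2 : (n:ℝ≥0∞) * (dN k (blockOnes k n x (firstWeak k n x)) : ℝ≥0∞)
        * (((k - blockOnes k n x (firstWeak k n x) : ℕ) : ℝ≥0∞)
          * ((n:ℝ≥0∞)⁻¹ * (1 - (n:ℝ≥0∞)⁻¹) ^ (n-1)))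
        = ((n:ℝ≥0∞) * (n:ℝ≥0∞)⁻¹)
          * (((k - blockOnes k n x (firstWeak k n x) : ℕ) : ℝ≥0∞)
            * (dN k (blockOnes k n x (firstWeak k n x)) : ℝ≥0∞)
            * (1 - (n:ℝ≥0∞)⁻¹) ^ (n-1)) := by ring
    rw [e1, e2, hnn, one_mul, one_mul]
    have hkey : ((8 * (1 + blockOnes k n x (firstWeak k n x)
          * dN k (blockOnes k n x (firstWeak k n x) - 1)) : ℕ) : ℝ≥0∞)
        ≤ (((k - blockOnes k n x (firstWeak k n x))
            * dN k (blockOnes k n x (firstWeak k n x)) : ℕ) : ℝ≥0∞) :=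
      Nat.cast_le.mpr (dN_key hk hm2)
    have hstep1 : (1:ℝ≥0∞) + (blockOnes k n x (firstWeak k n x) : ℝ≥0∞)
        * (dN k (blockOnes k n x (firstWeak k n x) - 1) : ℝ≥0∞)
        = (8:ℝ≥0∞)⁻¹ * ((8 * (1 + blockOnes k n x (firstWeak k n x)
            * dN k (blockOnes k n x (firstWeak k n x) - 1)) : ℕ) : ℝ≥0∞) := by
      push_cast
      rw [← mul_assoc, ENNReal.inv_mul_cancel h8 h8', one_mul]
    rw [hstep1]
    calc (8:ℝ≥0∞)⁻¹ * ((8 * (1 + blockOnes k n x (firstWeak k n x)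
            * dN k (blockOnes k n x (firstWeak k n x) - 1)) : ℕ) : ℝ≥0∞)
        ≤ (8:ℝ≥0∞)⁻¹ * (((k - blockOnes k n x (firstWeak k n x))
            * dN k (blockOnes k n x (firstWeak k n x)) : ℕ) : ℝ≥0∞) :=
          mul_le_mul_right hkey _
      _ = ((k - blockOnes k n x (firstWeak k n x) : ℕ) : ℝ≥0∞)
            * (dN k (blockOnes k n x (firstWeak k n x)) : ℝ≥0∞) * (8:ℝ≥0∞)⁻¹ := by
          push_cast
          ring
      _ ≤ ((k - blockOnes k n x (firstWeak k n x) : ℕ) : ℝ≥0∞)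
            * (dN k (blockOnes k n x (firstWeak k n x)) : ℝ≥0∞)
            * (1 - (n:ℝ≥0∞)⁻¹) ^ (n-1) :=
          mul_le_mul_right (ennreal_pow_bound hn2) _
  -- final cancellation
  have hRne : (n:ℝ≥0∞) * (dN k (blockOnes k n x (firstWeak k n x) - 1) : ℝ≥0∞)
      * ((blockOnes k n x (firstWeak k n x) : ℝ≥0∞) * (n:ℝ≥0∞)⁻¹) ≠ ⊤ := by
    apply ENNReal.mul_ne_top
    · exact ENNReal.mul_ne_top (ENNReal.natCast_ne_top n) (ENNReal.natCast_ne_top _)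
    · exact ENNReal.mul_ne_top (ENNReal.natCast_ne_top _)
        (ENNReal.inv_ne_top.mpr (by exact_mod_cast hn0.ne'))
  rw [hstepval]
  rw [← ENNReal.add_le_add_iff_right hRne]
  calc 1 + (∑' y, mutatePMF n x y * (GvalN k n x y : ℝ≥0∞))
        + (n:ℝ≥0∞) * (dN k (blockOnes k n x (firstWeak k n x) - 1) : ℝ≥0∞)
          * ((blockOnes k n x (firstWeak k n x) : ℝ≥0∞) * (n:ℝ≥0∞)⁻¹)
      = (∑' y, mutatePMF n x y * (GvalN k n x y : ℝ≥0∞))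
        + (1 + (n:ℝ≥0∞) * (dN k (blockOnes k n x (firstWeak k n x) - 1) : ℝ≥0∞)
          * ((blockOnes k n x (firstWeak k n x) : ℝ≥0∞) * (n:ℝ≥0∞)⁻¹)) := by ring
    _ ≤ (∑' y, mutatePMF n x y * (GvalN k n x y : ℝ≥0∞))
        + (n:ℝ≥0∞) * (dN k (blockOnes k n x (firstWeak k n x)) : ℝ≥0∞)
          * (((k - blockOnes k n x (firstWeak k n x) : ℕ) : ℝ≥0∞)
            * ((n:ℝ≥0∞)⁻¹ * (1 - (n:ℝ≥0∞)⁻¹) ^ (n-1))) := add_le_add_right hnum _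
    _ ≤ (gfN k n x : ℝ≥0∞)
        + (n:ℝ≥0∞) * (dN k (blockOnes k n x (firstWeak k n x) - 1) : ℝ≥0∞)
          * ((blockOnes k n x (firstWeak k n x) : ℝ≥0∞) * (n:ℝ≥0∞)⁻¹) := hsum

end DriftStep
/-! ### Part 9: invariant, telescoping, final theorem -/

section Final

variable {k n : ℕ}

def BInv (k n : ℕ) (s : (BitStr n × ℕ) × Bool) : Prop :=
  s.2 = true ∨ (s.1.2 = lsVal k n s.1.1 ∧ lsVal k n s.1.1 < n)

lemma step_support {s s' : (BitStr n × ℕ) × Bool}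
    (h : s' ∈ (baldwinStep k n s).support) :
    ∃ y z, z ∈ (localSearch k n y).support ∧
      s' = (if s.1.2 ≤ dlb k n z then (y, dlb k n z) else s.1,
            if s.2 = true ∨ y = allOnes n ∨ z = allOnes n then true else false) := by
  rw [baldwinStep, PMF.support_bind] at h
  rw [Set.mem_iUnion₂] at h
  obtain ⟨y, hy, h⟩ := h
  rw [PMF.support_map] at h
  obtain ⟨z, hz, heq⟩ := h
  exact ⟨y, z, hz, heq.symm⟩

lemma inv_step (hdvd : k ∣ n) (hk : 2 ≤ k) {s s' : (BitStr n × ℕ) × Bool}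
    (hInv : BInv k n s) (h : s' ∈ (baldwinStep k n s).support) : BInv k n s' := by
  obtain ⟨y, z, hz, rfl⟩ := step_support h
  by_cases hcond : (s.2 = true ∨ y = allOnes n ∨ z = allOnes n)
  · left
    rw [if_pos hcond]
  · push_neg at hcond
    obtain ⟨hs2, hy, hzn⟩ := hcond
    obtain ⟨hdz, hiff⟩ := localSearch_support hdvd hk y z hz
    have hlyn : lsVal k n y ≠ n := fun h => hzn (hiff.mpr h)
    have hlylt : lsVal k n y < n := lt_of_le_of_ne (lsVal_le hdvd hk y) hlyn
    have hcondneg : ¬(s.2 = true ∨ y = allOnes n ∨ z = allOnes n) := by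
      push_neg
      exact ⟨hs2, hy, hzn⟩
    right
    rw [if_neg hcondneg]
    by_cases hacc : s.1.2 ≤ dlb k n z
    · rw [if_pos hacc]
      refine ⟨hdz, ?_⟩
      show lsVal k n y < n
      exact hlylt
    · rw [if_neg hacc]
      rcases hInv with h1 | h2
      · exact absurd h1 hs2
      · exact h2

lemma inv_dist (hdvd : k ∣ n) (hk : 2 ≤ k) :
    ∀ t, ∀ s ∈ (baldwinDist k n t).support, BInv k n s := by
  intro t
  induction t with
  | zero =>
    intro s hs
    rw [baldwinDist, PMF.support_bind, Set.mem_iUnion₂] at hs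
    obtain ⟨x0, hx0, hs⟩ := hs
    rw [PMF.support_map] at hs
    obtain ⟨z, hz, heq⟩ := hs
    subst heq
    dsimp only
    by_cases hcond : (x0 = allOnes n ∨ z = allOnes n)
    · left
      rw [if_pos hcond]
    · push_neg at hcond
      obtain ⟨hy, hzn⟩ := hcond
      obtain ⟨hdz, hiff⟩ := localSearch_support hdvd hk x0 z hz
      have hlyn : lsVal k n x0 ≠ n := fun h => hzn (hiff.mpr h)
      have hlylt : lsVal k n x0 < n := lt_of_le_of_ne (lsVal_le hdvd hk x0) hlyn
      have hcondneg : ¬(x0 = allOnes n ∨ z = allOnes n) := by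
        push_neg
        exact ⟨hy, hzn⟩
      right
      rw [if_neg hcondneg]
      exact ⟨hdz, hlylt⟩
  | succ t ih =>
    intro s hs
    rw [baldwinDist, PMF.support_bind, Set.mem_iUnion₂] at hs
    obtain ⟨s0, hs0, hs⟩ := hs
    exact inv_step hdvd hk (ih s0 hs0) hs

lemma drift_all (hdvd : k ∣ n) (hk : 2 ≤ k) (hn2 : 2 ≤ n)
    (s : (BitStr n × ℕ) × Bool) (hInv : BInv k n s) :
    (if s.2 = false then 1 else 0) + ∑' s', baldwinStep k n s s' * gE k n s' ≤ gE k n s := by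
  obtain ⟨⟨x, v⟩, flag⟩ := s
  cases flag with
  | true =>
    have hE : ∑' s', baldwinStep k n ((x, v), true) s' * gE k n s' = 0 := by
      apply _root_.expect_const
      intro s' hs'
      obtain ⟨y, z, hz, rfl⟩ := step_support hs'
      rw [if_pos (Or.inl rfl)]
      simp [gE]
    rw [hE]
    simp [gE]
  | false =>
    rcases hInv with h1 | h2
    · exact absurd h1 (by simp)
    · obtain ⟨hv, hlt⟩ := h2
      have hgE : gE k n ((x, v), false) = (gfN k n x : ℝ≥0∞) := by simp [gE]
      rw [hgE, if_pos rfl]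
      exact drift_step hdvd hk hn2 x v hv hlt

lemma phi_step (hdvd : k ∣ n) (hk : 2 ≤ k) (hn2 : 2 ≤ n) (t : ℕ) :
    prOf (baldwinDist k n t) {s | s.2 = false}
      + ∑' s, baldwinDist k n (t + 1) s * gE k n s
    ≤ ∑' s, baldwinDist k n t s * gE k n s := by
  have h1 : ∑' s, baldwinDist k n (t + 1) s * gE k n s
      = ∑' s, baldwinDist k n t s * ∑' s', baldwinStep k n s s' * gE k n s' := by
    rw [baldwinDist]
    exact expect_bind _ _ _
  have h2 : prOf (baldwinDist k n t) {s | s.2 = false}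
      = ∑' s, baldwinDist k n t s * (if s.2 = false then 1 else 0) := by
    unfold prOf
    apply tsum_congr
    intro s
    rw [Set.indicator_apply]
    by_cases h : s.2 = false
    · rw [if_pos (by exact h), if_pos (by exact h), mul_one]
    · rw [if_neg (by exact h), if_neg (by exact h), mul_zero]
  rw [h1, h2, ← ENNReal.tsum_add]
  rw [tsum_congr (fun s => (mul_add (baldwinDist k n t s) _ _).symm)]
  exact expect_mono _ _ _ (fun s hs => drift_all hdvd hk hn2 s (inv_dist hdvd hk t s hs))

lemma gE_le_BN (hdvd : k ∣ n) (hk : 2 ≤ k) (s : (BitStr n × ℕ) × Bool) :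
    gE k n s ≤ (BN k n : ℝ≥0∞) := by
  unfold gE
  split
  · exact zero_le
  · apply Nat.cast_le.mpr
    unfold gfN BN
    have h1 : AN k n * (n - 1 - lsVal k n s.1.1) ≤ AN k n * n :=
      Nat.mul_le_mul_left _ (by omega)
    have h2 : n * uN k (blockOnes k n s.1.1 (firstWeak k n s.1.1)) ≤ n * uN k 0 :=
      Nat.mul_le_mul_left _ (uN_anti (Nat.zero_le _))
    omega

lemma phi_zero_le (hdvd : k ∣ n) (hk : 2 ≤ k) :
    ∑' s, baldwinDist k n 0 s * gE k n s ≤ (BN k n : ℝ≥0∞) :=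
  expect_le_const _ _ _ (fun s _ => gE_le_BN hdvd hk s)

lemma partial_sum_le (hdvd : k ∣ n) (hk : 2 ≤ k) (hn2 : 2 ≤ n) (T : ℕ) :
    (∑ t ∈ Finset.range T, prOf (baldwinDist k n t) {s | s.2 = false})
      + ∑' s, baldwinDist k n T s * gE k n s
    ≤ ∑' s, baldwinDist k n 0 s * gE k n s := by
  induction T with
  | zero => simp
  | succ T ih =>
    rw [Finset.sum_range_succ]
    calc ∑ t ∈ Finset.range T, prOf (baldwinDist k n t) {s | s.2 = false}
          + prOf (baldwinDist k n T) {s | s.2 = false}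
          + ∑' s, baldwinDist k n (T + 1) s * gE k n s
        = ∑ t ∈ Finset.range T, prOf (baldwinDist k n t) {s | s.2 = false}
          + (prOf (baldwinDist k n T) {s | s.2 = false}
            + ∑' s, baldwinDist k n (T + 1) s * gE k n s) := by ring
      _ ≤ ∑ t ∈ Finset.range T, prOf (baldwinDist k n t) {s | s.2 = false}
          + ∑' s, baldwinDist k n T s * gE k n s :=
          add_le_add_right (phi_step hdvd hk hn2 T) _
      _ ≤ _ := ih

lemma ert_le_BN (hdvd : k ∣ n) (hk : 2 ≤ k) (hn2 : 2 ≤ n) :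
    baldwinERT k n ≤ (BN k n : ℝ≥0∞) := by
  unfold baldwinERT
  rw [ENNReal.tsum_eq_iSup_sum]
  apply iSup_le
  intro F
  have hsub : F ⊆ Finset.range (F.sup id + 1) := by
    intro t ht
    rw [Finset.mem_range]
    exact Nat.lt_succ_of_le (Finset.le_sup (f := id) ht)
  calc ∑ t ∈ F, prOf (baldwinDist k n t) {s | s.2 = false}
      ≤ ∑ t ∈ Finset.range (F.sup id + 1), prOf (baldwinDist k n t) {s | s.2 = false} :=
        Finset.sum_le_sum_of_subset hsub
    _ ≤ ∑' s, baldwinDist k n 0 s * gE k n s := by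
        have hps := partial_sum_le hdvd hk hn2 (F.sup id + 1)
        calc ∑ t ∈ Finset.range (F.sup id + 1), prOf (baldwinDist k n t) {s | s.2 = false}
            ≤ (∑ t ∈ Finset.range (F.sup id + 1), prOf (baldwinDist k n t) {s | s.2 = false})
              + ∑' s, baldwinDist k n (F.sup id + 1) s * gE k n s := le_add_of_nonneg_right zero_le
          _ ≤ _ := hps
    _ ≤ (BN k n : ℝ≥0∞) := phi_zero_le hdvd hk

end Final

/-- For every constant integer `k ≥ 2` there is a constant `C > 0` such that for
all sufficiently large positive integer multiples `n` of `k`, the expected runtime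
of the Baldwinian (1+1) EA with best-improvement local search on `DLB_k` over
`{0,1}^n` is at most `C · n^2`. -/
theorem baldwin_ert_upper (k : ℕ) (hk : 2 ≤ k) :
    ∃ C : ℝ, 0 < C ∧ ∃ N : ℕ, ∀ n : ℕ, N ≤ n → 0 < n → k ∣ n →
      baldwinERT k n ≤ ENNReal.ofReal C * (n : ℝ≥0∞) ^ 2 := by
  refine ⟨(CN k : ℝ), by
    have : 0 < CN k := by
      unfold CN
      positivity
    exact_mod_cast this, 1, ?_⟩
  intro n _ hn hdvd
  have hn2 : 2 ≤ n := le_trans hk (Nat.le_of_dvd hn hdvd)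
  have h1 : baldwinERT k n ≤ (BN k n : ℝ≥0∞) := ert_le_BN hdvd hk hn2
  have h2 : (BN k n : ℝ≥0∞) ≤ ((n ^ 2 * CN k : ℕ) : ℝ≥0∞) :=
    Nat.cast_le.mpr (BN_le hk hn)
  have h3 : ((n ^ 2 * CN k : ℕ) : ℝ≥0∞) = ENNReal.ofReal (CN k : ℝ) * (n : ℝ≥0∞) ^ 2 := by
    rw [ENNReal.ofReal_natCast]
    push_cast
    ring
  calc baldwinERT k n ≤ (BN k n : ℝ≥0∞) := h1
    _ ≤ ((n ^ 2 * CN k : ℕ) : ℝ≥0∞) := h2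
    _ = ENNReal.ofReal (CN k : ℝ) * (n : ℝ≥0∞) ^ 2 := h3
end
end

section
/- Let j ∈ [0..n/k−1] and let x ∈ {0,1}^n have at least k − 1 ones in each of the first j blocks and at most k − 2 ones in the (j+1)-st block. Then every run of best-improvement local search on DLB_k started at x (for every admissible tie-breaking) terminates at a point z whose first j blocks are all-ones and whose (j+1)-st block is all-zeros, so that DLB_k(z) = jk + k − 1. In particular, the value of the result of best-improvement local search applied to x (the Baldwinian fitness of x) equals jk + k − 1. -/
open Finset
open scoped ENNReal

noncomputable section

namespace BaldwinAux

set_option linter.unusedSectionVars false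
set_option linter.unusedVariables false

variable {k n : ℕ}

def blockSet (k n : ℕ) (ℓ : ℕ) : Finset (Fin n) :=
  Finset.univ.filter fun i : Fin n => ℓ * k ≤ i.1 ∧ i.1 < ℓ * k + k

lemma blockOnes_eq (x : BitStr n) (ℓ : ℕ) :
    blockOnes k n x ℓ = ((blockSet k n ℓ).filter fun i => x i = true).card := by
  unfold blockOnes blockSet
  rw [Finset.filter_filter]
  congr 1
  apply Finset.filter_congr
  intro i _
  tauto

lemma card_blockSet {ℓ : ℕ} (h : ℓ * k + k ≤ n) : (blockSet k n ℓ).card = k := by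
  have h1 : (blockSet k n ℓ).card = (Finset.Ico (ℓ*k) (ℓ*k+k)).card := by
    apply Finset.card_bij (fun i _ => i.1)
    · intro a ha; simp only [blockSet, Finset.mem_filter, Finset.mem_univ, true_and] at ha
      simp [Finset.mem_Ico]; omega
    · intro a _ b _ hab; exact Fin.ext hab
    · intro b hb
      simp only [Finset.mem_Ico] at hb
      exact ⟨⟨b, by omega⟩, by simp [blockSet]; omega, rfl⟩
  rw [h1, Nat.card_Ico]; omega

lemma blockOnes_le_k {x : BitStr n} {ℓ : ℕ} (h : ℓ * k + k ≤ n) : blockOnes k n x ℓ ≤ k := by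
  rw [blockOnes_eq]
  calc _ ≤ (blockSet k n ℓ).card := Finset.card_le_card (Finset.filter_subset _ _)
    _ = k := card_blockSet h

lemma eq_true_of_full {x : BitStr n} {ℓ : ℕ} (hfit : ℓ * k + k ≤ n)
    (h : blockOnes k n x ℓ = k) :
    ∀ i : Fin n, ℓ * k ≤ i.1 → i.1 < ℓ * k + k → x i = true := by
  intro i h1 h2
  have hsub : (blockSet k n ℓ).filter (fun i => x i = true) = blockSet k n ℓ := by
    apply Finset.eq_of_subset_of_card_le (Finset.filter_subset _ _)
    rw [card_blockSet hfit, ← blockOnes_eq, h]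
  have hi : i ∈ (blockSet k n ℓ).filter (fun i => x i = true) := by
    rw [hsub]; simp [blockSet]; omega
  exact (Finset.mem_filter.mp hi).2

lemma eq_false_of_zero {x : BitStr n} {ℓ : ℕ} (h : blockOnes k n x ℓ = 0) :
    ∀ i : Fin n, ℓ * k ≤ i.1 → i.1 < ℓ * k + k → x i = false := by
  intro i h1 h2
  have he := Finset.card_eq_zero.mp h
  by_contra hxi
  have hxi' : x i = true := by revert hxi; cases x i <;> simp
  have hm : i ∈ (Finset.univ.filter fun i : Fin n => ℓ * k ≤ i.1 ∧ i.1 < ℓ * k + k ∧ x i = true) := by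
    simp [hxi']; omega
  rw [he] at hm
  simp at hm

lemma blockOnes_update_notMem {x : BitStr n} {i : Fin n} {b : Bool} {ℓ : ℕ}
    (h : ¬(ℓ * k ≤ i.1 ∧ i.1 < ℓ * k + k)) :
    blockOnes k n (Function.update x i b) ℓ = blockOnes k n x ℓ := by
  unfold blockOnes
  congr 1
  apply Finset.filter_congr
  intro i' _
  by_cases hi : i' = i
  · subst hi
    constructor <;> (rintro ⟨h1, h2, -⟩; exact absurd ⟨h1, h2⟩ h)
  · simp [Function.update_of_ne hi]

lemma blockOnes_update_true {x : BitStr n} {i : Fin n} {ℓ : ℕ}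
    (h1 : ℓ * k ≤ i.1) (h2 : i.1 < ℓ * k + k) (hx : x i = false) :
    blockOnes k n (Function.update x i true) ℓ = blockOnes k n x ℓ + 1 := by
  unfold blockOnes
  have he : (Finset.univ.filter fun i' : Fin n => ℓ * k ≤ i'.1 ∧ i'.1 < ℓ * k + k ∧ Function.update x i true i' = true)
      = insert i (Finset.univ.filter fun i' : Fin n => ℓ * k ≤ i'.1 ∧ i'.1 < ℓ * k + k ∧ x i' = true) := by
    ext i'
    simp only [Finset.mem_insert, Finset.mem_filter, Finset.mem_univ, true_and]
    by_cases hi : i' = i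
    · subst hi; simp [h1, h2]
    · simp [Function.update_of_ne hi, hi]
  rw [he, Finset.card_insert_of_notMem (by simp [hx])]

lemma blockOnes_update_false {x : BitStr n} {i : Fin n} {ℓ : ℕ}
    (h1 : ℓ * k ≤ i.1) (h2 : i.1 < ℓ * k + k) (hx : x i = true) :
    blockOnes k n x ℓ = blockOnes k n (Function.update x i false) ℓ + 1 := by
  unfold blockOnes
  have he : (Finset.univ.filter fun i' : Fin n => ℓ * k ≤ i'.1 ∧ i'.1 < ℓ * k + k ∧ x i' = true)
      = insert i (Finset.univ.filter fun i' : Fin n => ℓ * k ≤ i'.1 ∧ i'.1 < ℓ * k + k ∧ Function.update x i false i' = true) := by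
    ext i'
    simp only [Finset.mem_insert, Finset.mem_filter, Finset.mem_univ, true_and]
    by_cases hi : i' = i
    · subst hi; simp [h1, h2, hx]
    · simp [Function.update_of_ne hi, hi]
  rw [he, Finset.card_insert_of_notMem (by simp)]

lemma leadBlocks_le (x : BitStr n) : leadBlocks k n x ≤ n / k := Nat.findGreatest_le _

lemma leadBlocks_full (x : BitStr n) : ∀ ℓ < leadBlocks k n x, blockOnes k n x ℓ = k :=
  Nat.findGreatest_spec (P := fun j => ∀ ℓ < j, blockOnes k n x ℓ = k) (Nat.zero_le _)
    (fun ℓ h => absurd h (Nat.not_lt_zero ℓ))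

lemma leadBlocks_ne {x : BitStr n} (h : leadBlocks k n x < n / k) :
    blockOnes k n x (leadBlocks k n x) ≠ k := by
  intro hkk
  have hgr := Nat.findGreatest_is_greatest (P := fun j => ∀ ℓ < j, blockOnes k n x ℓ = k)
    (n := n / k) (k := leadBlocks k n x + 1) (by unfold leadBlocks; omega) (by omega)
  apply hgr
  intro ℓ hℓ
  rcases Nat.lt_or_ge ℓ (leadBlocks k n x) with h' | h'
  · exact leadBlocks_full x ℓ h'
  · have : ℓ = leadBlocks k n x := by omega
    rw [this]; exact hkk

lemma leadBlocks_eq {x : BitStr n} {L : ℕ} (hL : L ≤ n / k)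
    (hfull : ∀ ℓ < L, blockOnes k n x ℓ = k) (hnot : blockOnes k n x L ≠ k) :
    leadBlocks k n x = L := by
  apply le_antisymm
  · by_contra h
    push_neg at h
    exact hnot (leadBlocks_full x L h)
  · exact Nat.le_findGreatest hL hfull

lemma fit_of_lt (hdvd : k ∣ n) {ℓ : ℕ} (h : ℓ < n / k) : ℓ * k + k ≤ n := by
  have h1 : (ℓ + 1) * k ≤ (n / k) * k := Nat.mul_le_mul_right k h
  rw [Nat.div_mul_cancel hdvd] at h1
  have h2 : (ℓ + 1) * k = ℓ * k + k := by ring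
  omega

lemma blockOnes_allOnes {ℓ : ℕ} (hk : 0 < k) (hfit : ℓ * k + k ≤ n) :
    blockOnes k n (allOnes n) ℓ = k := by
  have h1 : blockOnes k n (allOnes n) ℓ = (Finset.Ico (ℓ*k) (ℓ*k+k)).card := by
    unfold blockOnes
    apply Finset.card_bij (fun i _ => i.1)
    · intro a ha; simp only [Finset.mem_filter, Finset.mem_univ, true_and] at ha
      simp [Finset.mem_Ico]; omega
    · intro a _ b _ hab; exact Fin.ext hab
    · intro b hb
      simp only [Finset.mem_Ico] at hb
      exact ⟨⟨b, by omega⟩, by simp [allOnes]; omega, rfl⟩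
  rw [h1, Nat.card_Ico]; omega

lemma not_inBlock {ℓ ℓ' m : ℕ} (hne : ℓ ≠ ℓ') (h1 : ℓ' * k ≤ m) (h2 : m < ℓ' * k + k) :
    ¬(ℓ * k ≤ m ∧ m < ℓ * k + k) := by
  rintro ⟨h3, h4⟩
  rcases Nat.lt_or_ge ℓ ℓ' with h | h
  · have h5 : (ℓ + 1) * k ≤ ℓ' * k := Nat.mul_le_mul_right k h
    have h6 : (ℓ + 1) * k = ℓ * k + k := by ring
    omega
  · have hlt : ℓ' < ℓ := by omega
    have h5 : (ℓ' + 1) * k ≤ ℓ * k := Nat.mul_le_mul_right k hlt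
    have h6 : (ℓ' + 1) * k = ℓ' * k + k := by ring
    omega

lemma dlb_eq (hk : 0 < k) (hdvd : k ∣ n) {x : BitStr n} {L : ℕ} (hL : L < n / k)
    (hfull : ∀ ℓ < L, blockOnes k n x ℓ = k) (hnot : blockOnes k n x L ≠ k) :
    dlb k n x = k * L + (k - 1 - blockOnes k n x L) := by
  have hfit : L * k + k ≤ n := fit_of_lt hdvd hL
  have hx : x ≠ allOnes n := by
    intro h; exact hnot (h ▸ blockOnes_allOnes hk hfit)
  rw [dlb, if_neg hx, leadBlocks_eq (le_of_lt hL) hfull hnot]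

variable (hk : 2 ≤ k) (hdvd : k ∣ n) {x : BitStr n} {L : ℕ} (hL : L < n / k)
  (hfull : ∀ ℓ < L, blockOnes k n x ℓ = k) (hnot : blockOnes k n x L ≠ k)

include hk hdvd hL hfull hnot in
lemma flip1 {i : Fin n} {ℓᵢ : ℕ} (hℓ : ℓᵢ < L) (h1 : ℓᵢ * k ≤ i.1) (h2 : i.1 < ℓᵢ * k + k) :
    dlb k n (Function.update x i (!x i)) ≤ dlb k n x := by
  have hfitℓ : ℓᵢ * k + k ≤ n := fit_of_lt hdvd (by omega)
  have hxi : x i = true := eq_true_of_full hfitℓ (hfull ℓᵢ hℓ) i h1 h2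
  have hflip : (!x i) = false := by rw [hxi]; rfl
  rw [hflip]
  have hyb : blockOnes k n x ℓᵢ = blockOnes k n (Function.update x i false) ℓᵢ + 1 :=
    blockOnes_update_false h1 h2 hxi
  rw [hfull ℓᵢ hℓ] at hyb
  have hyfull : ∀ ℓ < ℓᵢ, blockOnes k n (Function.update x i false) ℓ = k := by
    intro ℓ hℓ'
    rw [blockOnes_update_notMem (not_inBlock (by omega) h1 h2)]
    exact hfull ℓ (by omega)
  have hynot : blockOnes k n (Function.update x i false) ℓᵢ ≠ k := by omega
  rw [dlb_eq (by omega) hdvd (show ℓᵢ < n / k by omega) hyfull hynot,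
      dlb_eq (by omega) hdvd hL hfull hnot]
  have hm : k * ℓᵢ + k ≤ k * L := by
    have := Nat.mul_le_mul_left k (show ℓᵢ + 1 ≤ L by omega)
    have he : k * (ℓᵢ + 1) = k * ℓᵢ + k := by ring
    omega
  omega

include hk hdvd hL hfull hnot in
lemma flip2 {i : Fin n} (h1 : L * k ≤ i.1) (h2 : i.1 < L * k + k) (hxi : x i = true) :
    dlb k n (Function.update x i (!x i)) = dlb k n x + 1 := by
  have hflip : (!x i) = false := by rw [hxi]; rfl
  rw [hflip]
  have hble : blockOnes k n x L ≤ k := blockOnes_le_k (fit_of_lt hdvd hL)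
  have hyb : blockOnes k n x L = blockOnes k n (Function.update x i false) L + 1 :=
    blockOnes_update_false h1 h2 hxi
  have hyfull : ∀ ℓ < L, blockOnes k n (Function.update x i false) ℓ = k := by
    intro ℓ hℓ'
    rw [blockOnes_update_notMem (not_inBlock (by omega) h1 h2)]
    exact hfull ℓ hℓ'
  have hynot : blockOnes k n (Function.update x i false) L ≠ k := by omega
  rw [dlb_eq (by omega) hdvd hL hyfull hynot, dlb_eq (by omega) hdvd hL hfull hnot]
  omega

include hk hdvd hL hfull hnot in
lemma flip3 {i : Fin n} (h1 : L * k ≤ i.1) (h2 : i.1 < L * k + k) (hxi : x i = false)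
    (h3 : blockOnes k n x L + 1 < k) :
    dlb k n (Function.update x i (!x i)) ≤ dlb k n x := by
  have hflip : (!x i) = true := by rw [hxi]; rfl
  rw [hflip]
  have hyb : blockOnes k n (Function.update x i true) L = blockOnes k n x L + 1 :=
    blockOnes_update_true h1 h2 hxi
  have hyfull : ∀ ℓ < L, blockOnes k n (Function.update x i true) ℓ = k := by
    intro ℓ hℓ'
    rw [blockOnes_update_notMem (not_inBlock (by omega) h1 h2)]
    exact hfull ℓ hℓ'
  have hynot : blockOnes k n (Function.update x i true) L ≠ k := by omega
  rw [dlb_eq (by omega) hdvd hL hyfull hynot, dlb_eq (by omega) hdvd hL hfull hnot]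
  omega

include hk hdvd hL hfull hnot in
lemma flip4 {i : Fin n} (h1 : L * k ≤ i.1) (h2 : i.1 < L * k + k) (hxi : x i = false)
    (h3 : blockOnes k n x L + 1 = k) :
    k * L + k ≤ dlb k n (Function.update x i (!x i)) := by
  have hflip : (!x i) = true := by rw [hxi]; rfl
  rw [hflip]
  have hyb : blockOnes k n (Function.update x i true) L = blockOnes k n x L + 1 :=
    blockOnes_update_true h1 h2 hxi
  have hyfull : ∀ ℓ < L + 1, blockOnes k n (Function.update x i true) ℓ = k := by
    intro ℓ hℓ'
    rcases Nat.lt_or_ge ℓ L with h | h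
    · rw [blockOnes_update_notMem (not_inBlock (by omega) h1 h2)]
      exact hfull ℓ h
    · have : ℓ = L := by omega
      rw [this]; omega
  have hm : k * (L + 1) = k * L + k := by ring
  by_cases hall : Function.update x i true = allOnes n
  · rw [dlb, if_pos hall]
    have h4 : k * (L + 1) ≤ k * (n / k) := Nat.mul_le_mul_left k (by omega)
    rw [Nat.mul_div_cancel' hdvd] at h4
    omega
  · rw [dlb, if_neg hall]
    have hge : L + 1 ≤ leadBlocks k n (Function.update x i true) :=
      Nat.le_findGreatest (by omega) hyfull
    have h4 : k * (L + 1) ≤ k * leadBlocks k n (Function.update x i true) :=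
      Nat.mul_le_mul_left k hge
    omega

include hk hdvd hL hfull hnot in
lemma flip5 {i : Fin n} (h1 : L * k + k ≤ i.1) (b' : Bool) :
    dlb k n (Function.update x i b') = dlb k n x := by
  have hnm : ∀ ℓ ≤ L, ¬(ℓ * k ≤ i.1 ∧ i.1 < ℓ * k + k) := by
    intro ℓ hℓ
    have : ℓ * k ≤ L * k := Nat.mul_le_mul_right k hℓ
    omega
  have hyfull : ∀ ℓ < L, blockOnes k n (Function.update x i b') ℓ = k := by
    intro ℓ hℓ'
    rw [blockOnes_update_notMem (hnm ℓ (by omega))]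
    exact hfull ℓ hℓ'
  have hyb : blockOnes k n (Function.update x i b') L = blockOnes k n x L :=
    blockOnes_update_notMem (hnm L le_rfl)
  rw [dlb_eq (by omega) hdvd hL hyfull (hyb ▸ hnot), dlb_eq (by omega) hdvd hL hfull hnot, hyb]

lemma block_cover (hk0 : 0 < k) (i : Fin n) :
    (i.1 / k) * k ≤ i.1 ∧ i.1 < (i.1 / k) * k + k := by
  exact ⟨Nat.div_mul_le_self _ _, Nat.lt_div_mul_add hk0⟩

omit hk hdvd hL hfull hnot

lemma mem_nbhd_iff {x y : BitStr n} :
    y ∈ nbhd n x ↔ ∃ i : Fin n, y = Function.update x i (!x i) := by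
  simp [nbhd, eq_comm]

lemma main_step {j : ℕ} (hk : 2 ≤ k) (hdvd : k ∣ n) (hj : j < n / k)
    {x : BitStr n} (hlead : ∀ ℓ < j, k - 1 ≤ blockOnes k n x ℓ)
    (hcrit : blockOnes k n x j ≤ k - 2) :
    (¬(∃ y ∈ nbhd n x, dlb k n x < dlb k n y) →
       (∀ i : Fin n, i.1 < j * k → x i = true) ∧
       (∀ i : Fin n, j * k ≤ i.1 → i.1 < j * k + k → x i = false) ∧
       dlb k n x = j * k + k - 1) ∧
    (∀ y ∈ (nbhd n x).filter (fun y => ∀ z ∈ nbhd n x, dlb k n z ≤ dlb k n y),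
       (∃ y' ∈ nbhd n x, dlb k n x < dlb k n y') →
         ((∀ ℓ < j, k - 1 ≤ blockOnes k n y ℓ) ∧ blockOnes k n y j ≤ k - 2 ∧
          dlb k n x < dlb k n y)) := by
  set L := leadBlocks k n x with hLdef
  have hfull : ∀ ℓ < L, blockOnes k n x ℓ = k := leadBlocks_full x
  have hLle : L ≤ j := by
    by_contra h
    push_neg at h
    have := hfull j h
    omega
  have hLlt : L < n / k := lt_of_le_of_lt hLle hj
  have hnot : blockOnes k n x L ≠ k := leadBlocks_ne hLlt
  have hfitL : L * k + k ≤ n := fit_of_lt hdvd hLlt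
  have hble : blockOnes k n x L ≤ k := blockOnes_le_k hfitL
  have hdx : dlb k n x = k * L + (k - 1 - blockOnes k n x L) :=
    dlb_eq (by omega) hdvd hLlt hfull hnot
  -- classification of neighbours
  have hclass : ∀ i : Fin n,
      (∃ ℓᵢ, ℓᵢ < L ∧ ℓᵢ * k ≤ i.1 ∧ i.1 < ℓᵢ * k + k) ∨
      (L * k ≤ i.1 ∧ i.1 < L * k + k) ∨ (L * k + k ≤ i.1) := by
    intro i
    obtain ⟨hq1, hq2⟩ := block_cover (show 0 < k by omega) i
    rcases lt_trichotomy (i.1 / k) L with h | h | h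
    · exact Or.inl ⟨i.1 / k, h, hq1, hq2⟩
    · rw [h] at hq1 hq2
      exact Or.inr (Or.inl ⟨hq1, hq2⟩)
    · refine Or.inr (Or.inr ?_)
      have h5 : (L + 1) * k ≤ (i.1 / k) * k := Nat.mul_le_mul_right k h
      have h6 : (L + 1) * k = L * k + k := by ring
      omega
  rcases Nat.lt_or_ge L j with hLj | hLj
  -- CASE A : L < j
  · have hbL : blockOnes k n x L = k - 1 := by
      have := hlead L hLj
      omega
    -- find a zero in block L
    have hex0 : ∃ i : Fin n, L * k ≤ i.1 ∧ i.1 < L * k + k ∧ x i = false := by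
      by_contra h
      push_neg at h
      have hsub : (Finset.univ.filter fun i : Fin n => L * k ≤ i.1 ∧ i.1 < L * k + k) ⊆
          (Finset.univ.filter fun i : Fin n => L * k ≤ i.1 ∧ i.1 < L * k + k ∧ x i = true) := by
        intro a ha
        simp only [Finset.mem_filter, Finset.mem_univ, true_and] at ha ⊢
        have := h a ha.1 ha.2
        exact ⟨ha.1, ha.2, by revert this; cases x a <;> simp⟩
      have hcard : (Finset.univ.filter fun i : Fin n => L * k ≤ i.1 ∧ i.1 < L * k + k).card = k := by
        rw [show (Finset.univ.filter fun i : Fin n => L * k ≤ i.1 ∧ i.1 < L * k + k).card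
            = (Finset.Ico (L*k) (L*k+k)).card from ?_, Nat.card_Ico]
        · omega
        · apply Finset.card_bij (fun i _ => i.1)
          · intro a ha; simp only [Finset.mem_filter, Finset.mem_univ, true_and] at ha
            simp [Finset.mem_Ico]; omega
          · intro a _ b _ hab; exact Fin.ext hab
          · intro b hb
            simp only [Finset.mem_Ico] at hb
            exact ⟨⟨b, by omega⟩, by simp; omega, rfl⟩
      have := Finset.card_le_card hsub
      rw [hcard] at this
      have : k ≤ blockOnes k n x L := this
      omega
    obtain ⟨i₀, hi1, hi2, hi3⟩ := hex0
    have hy₀ : k * L + k ≤ dlb k n (Function.update x i₀ (!x i₀)) :=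
      flip4 hk hdvd hLlt hfull hnot hi1 hi2 hi3 (by omega)
    have hy₀mem : Function.update x i₀ (!x i₀) ∈ nbhd n x := mem_nbhd_iff.mpr ⟨i₀, rfl⟩
    have himp : ∃ y ∈ nbhd n x, dlb k n x < dlb k n y :=
      ⟨_, hy₀mem, by omega⟩
    constructor
    · intro h; exact absurd himp h
    · intro y hy _
      obtain ⟨hymem, hymax⟩ := Finset.mem_filter.mp hy
      have hyge : k * L + k ≤ dlb k n y :=
        le_trans hy₀ (hymax _ hy₀mem)
      obtain ⟨i, rfl⟩ := mem_nbhd_iff.mp hymem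
      rcases hclass i with ⟨ℓᵢ, hℓ, h1, h2⟩ | ⟨h1, h2⟩ | h1
      · exfalso
        have := flip1 hk hdvd hLlt hfull hnot hℓ h1 h2
        omega
      · rcases Bool.eq_false_or_eq_true (x i) with hxi | hxi
        · exfalso
          have := flip2 hk hdvd hLlt hfull hnot h1 h2 hxi
          omega
        · -- fill move
          have hflip : (!x i) = true := by simp [hxi]
          have hyb : blockOnes k n (Function.update x i (!x i)) L = blockOnes k n x L + 1 := by
            rw [hflip]; exact blockOnes_update_true h1 h2 hxi
          refine ⟨?_, ?_, by omega⟩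
          · intro ℓ hℓ
            by_cases hℓL : ℓ = L
            · rw [hℓL]; omega
            · rw [blockOnes_update_notMem (not_inBlock hℓL h1 h2)]
              exact hlead ℓ hℓ
          · rw [blockOnes_update_notMem (not_inBlock (by omega) h1 h2)]
            exact hcrit
      · exfalso
        have := flip5 hk hdvd hLlt hfull hnot h1 (!x i)
        omega
  -- CASE B/C : L = j
  · have hLj' : L = j := le_antisymm hLle hLj
    subst hLj'
    rcases Nat.eq_zero_or_pos (blockOnes k n x L) with hb0 | hb1
    -- CASE C : local optimum
    · have hnoimp : ¬(∃ y ∈ nbhd n x, dlb k n x < dlb k n y) := by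
        rintro ⟨y, hymem, hlt⟩
        obtain ⟨i, rfl⟩ := mem_nbhd_iff.mp hymem
        rcases hclass i with ⟨ℓᵢ, hℓ, h1, h2⟩ | ⟨h1, h2⟩ | h1
        · have := flip1 hk hdvd hLlt hfull hnot hℓ h1 h2
          omega
        · have hxi : x i = false := eq_false_of_zero hb0 i h1 h2
          have := flip3 hk hdvd hLlt hfull hnot h1 h2 hxi (by omega)
          omega
        · have := flip5 hk hdvd hLlt hfull hnot h1 (!x i)
          omega
      constructor
      · intro _
        refine ⟨?_, ?_, ?_⟩
        · intro i hlt'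
          obtain ⟨hq1, hq2⟩ := block_cover (show 0 < k by omega) i
          have hℓlt : i.1 / k < L := by
            by_contra hcon
            push_neg at hcon
            have : L * k ≤ (i.1 / k) * k := Nat.mul_le_mul_right k hcon
            omega
          exact eq_true_of_full (fit_of_lt hdvd (by omega)) (hfull _ hℓlt) i hq1 hq2
        · intro i hge hlt'
          exact eq_false_of_zero hb0 i hge hlt'
        · have hcomm : k * L = L * k := Nat.mul_comm k L
          omega
      · intro y hy himp
        exact absurd himp hnoimp
    -- CASE B : b >= 1
    · -- find a one in block L
      have hex1 : ∃ i : Fin n, L * k ≤ i.1 ∧ i.1 < L * k + k ∧ x i = true := by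
        obtain ⟨i, hi⟩ := Finset.card_pos.mp (show 0 < (Finset.univ.filter fun i : Fin n =>
            L * k ≤ i.1 ∧ i.1 < L * k + k ∧ x i = true).card from hb1)
        simp only [Finset.mem_filter, Finset.mem_univ, true_and] at hi
        exact ⟨i, hi⟩
      obtain ⟨i₀, hi1, hi2, hi3⟩ := hex1
      have hy₀ : dlb k n (Function.update x i₀ (!x i₀)) = dlb k n x + 1 :=
        flip2 hk hdvd hLlt hfull hnot hi1 hi2 hi3
      have hy₀mem : Function.update x i₀ (!x i₀) ∈ nbhd n x := mem_nbhd_iff.mpr ⟨i₀, rfl⟩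
      have himp : ∃ y ∈ nbhd n x, dlb k n x < dlb k n y := ⟨_, hy₀mem, by omega⟩
      constructor
      · intro h; exact absurd himp h
      · intro y hy _
        obtain ⟨hymem, hymax⟩ := Finset.mem_filter.mp hy
        have hyge : dlb k n x + 1 ≤ dlb k n y := hy₀ ▸ hymax _ hy₀mem
        obtain ⟨i, rfl⟩ := mem_nbhd_iff.mp hymem
        rcases hclass i with ⟨ℓᵢ, hℓ, h1, h2⟩ | ⟨h1, h2⟩ | h1
        · exfalso
          have := flip1 hk hdvd hLlt hfull hnot hℓ h1 h2
          omega
        · rcases Bool.eq_false_or_eq_true (x i) with hxi | hxi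
          · -- remove a one from the critical block
            have hflip : (!x i) = false := by simp [hxi]
            have hyb : blockOnes k n x L =
                blockOnes k n (Function.update x i (!x i)) L + 1 := by
              rw [hflip]; exact blockOnes_update_false h1 h2 hxi
            refine ⟨?_, by omega, by omega⟩
            intro ℓ hℓ
            rw [blockOnes_update_notMem (not_inBlock (by omega) h1 h2)]
            exact hlead ℓ hℓ
          · exfalso
            have := flip3 hk hdvd hLlt hfull hnot h1 h2 hxi (by omega)
            omega
        · exfalso
          have := flip5 hk hdvd hLlt hfull hnot h1 (!x i)
          omega

lemma dlb_lt_n {j : ℕ} (hk : 2 ≤ k) (hdvd : k ∣ n) (hj : j < n / k)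
    {x : BitStr n} (hlead : ∀ ℓ < j, k - 1 ≤ blockOnes k n x ℓ)
    (hcrit : blockOnes k n x j ≤ k - 2) : dlb k n x < n := by
  set L := leadBlocks k n x with hLdef
  have hfull : ∀ ℓ < L, blockOnes k n x ℓ = k := leadBlocks_full x
  have hLle : L ≤ j := by
    by_contra h
    push_neg at h
    have := hfull j h
    omega
  have hLlt : L < n / k := lt_of_le_of_lt hLle hj
  have hnot : blockOnes k n x L ≠ k := leadBlocks_ne hLlt
  have hdx : dlb k n x = k * L + (k - 1 - blockOnes k n x L) :=
    dlb_eq (by omega) hdvd hLlt hfull hnot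
  have h4 : k * (L + 1) ≤ k * (n / k) := Nat.mul_le_mul_left k (by omega)
  rw [Nat.mul_div_cancel' hdvd] at h4
  have h5 : k * (L + 1) = k * L + k := by ring
  omega

lemma ls_good {j : ℕ} (hk : 2 ≤ k) (hdvd : k ∣ n) (hj : j < n / k) :
    ∀ (m : ℕ) (x : BitStr n), (∀ ℓ < j, k - 1 ≤ blockOnes k n x ℓ) →
      blockOnes k n x j ≤ k - 2 → n ≤ dlb k n x + m →
      ∀ z ∈ (lsAux n (dlb k n) m x).support,
        (∀ i : Fin n, i.1 < j * k → z i = true) ∧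
        (∀ i : Fin n, j * k ≤ i.1 → i.1 < j * k + k → z i = false) ∧
        dlb k n z = j * k + k - 1 := by
  intro m
  induction m with
  | zero =>
    intro x hlead hcrit hfuel z hz
    exfalso
    have := dlb_lt_n hk hdvd hj hlead hcrit
    omega
  | succ m ih =>
    intro x hlead hcrit hfuel z hz
    rw [lsAux] at hz
    by_cases h : ∃ y ∈ nbhd n x, dlb k n x < dlb k n y
    · rw [dif_pos h] at hz
      rw [PMF.mem_support_bind_iff] at hz
      obtain ⟨y, hy, hzy⟩ := hz
      rw [PMF.support_uniformOfFinset, Finset.mem_coe] at hy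
      obtain ⟨hInv1, hInv2, hlt⟩ := (main_step hk hdvd hj hlead hcrit).2 y hy h
      exact ih y hInv1 hInv2 (by omega) z hzy
    · rw [dif_neg h] at hz
      rw [PMF.mem_support_pure_iff] at hz
      subst hz
      exact (main_step hk hdvd hj hlead hcrit).1 h

end BaldwinAux

/-- If `x` has at least `k - 1` ones in each of its first `j` blocks and at most
`k - 2` ones in its `(j+1)`-st block, then every run of best-improvement local
search on `DLB_k` started at `x` (i.e., every point in the support of the local
search distribution, so for every admissible tie-breaking) terminates at a point
`z` whose first `j` blocks are all-ones and whose `(j+1)`-st block is all-zeros,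
with `DLB_k(z) = jk + k - 1`; in particular the Baldwinian fitness of `x` equals
`jk + k - 1`. -/
theorem baldwin_fitness_on_plateau (k n : ℕ) (hk : 2 ≤ k) (hn : 0 < n)
    (hdvd : k ∣ n) (j : ℕ) (hj : j < n / k) (x : BitStr n)
    (hlead : ∀ ℓ < j, k - 1 ≤ blockOnes k n x ℓ)
    (hcrit : blockOnes k n x j ≤ k - 2) :
    ∀ z ∈ (localSearch k n x).support,
      (∀ i : Fin n, i.1 < j * k → z i = true) ∧
      (∀ i : Fin n, j * k ≤ i.1 → i.1 < j * k + k → z i = false) ∧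
      dlb k n z = j * k + k - 1 := by
  intro z hz
  exact BaldwinAux.ls_good hk hdvd hj (n + k + 1) x hlead hcrit (by omega) z hz

end
end

section
/- For every integer k ≥ 2, the inequality ∑_{ℓ=0}^{k−2} ( ∑_{i=0}^{ℓ} C(k,i) ) / C(k−1,ℓ) ≤ k·2^k/(k−1) ≤ 2^{k+1} holds, where C(a,b) denotes the binomial coefficient. -/
open Finset
open scoped ENNReal

noncomputable section

lemma nat_le_choose : ∀ n ℓ : ℕ, 1 ≤ ℓ → ℓ + 1 ≤ n → n ≤ n.choose ℓ := by
  intro n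
  induction n with
  | zero => intro ℓ h1 h2; omega
  | succ m ih =>
    intro ℓ h1 h2
    rcases eq_or_lt_of_le h1 with h | h
    · simp [← h]
    rcases eq_or_lt_of_le (Nat.lt_succ_iff.mp h2) with h' | h'
    · rw [h', Nat.choose_succ_self_right]
    · have hℓ : 1 ≤ ℓ - 1 := by omega
      have := ih (ℓ - 1) hℓ (by omega)
      have h0 : 0 < m.choose ℓ := Nat.choose_pos (by omega)
      have : m.choose (ℓ - 1) + m.choose ℓ ≥ m + 1 := by omega
      calc m + 1 ≤ m.choose (ℓ - 1) + m.choose ℓ := this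
        _ = (m + 1).choose ℓ := by
            have : ℓ = (ℓ - 1) + 1 := by omega
            rw [this, Nat.choose_succ_succ]; simp

/-- For every integer `k ≥ 2`,
`∑_{ℓ=0}^{k-2} (∑_{i=0}^{ℓ} C(k,i)) / C(k-1,ℓ) ≤ k · 2^k/(k-1) ≤ 2^{k+1}`. -/
theorem binom_ratio_sum_bound (k : ℕ) (hk : 2 ≤ k) :
    (∑ ℓ ∈ Finset.range (k - 1),
        (∑ i ∈ Finset.range (ℓ + 1), (k.choose i : ℝ)) / ((k - 1).choose ℓ : ℝ))
      ≤ (k : ℝ) * 2 ^ k / ((k : ℝ) - 1) ∧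
    (k : ℝ) * 2 ^ k / ((k : ℝ) - 1) ≤ 2 ^ (k + 1) := by
  have hk1 : (1 : ℝ) ≤ (k : ℝ) - 1 := by
    have : (2 : ℝ) ≤ (k : ℝ) := by exact_mod_cast hk
    linarith
  have hk1' : (0 : ℝ) < (k : ℝ) - 1 := by linarith
  have hkR : (2 : ℝ) ≤ (k : ℝ) := by exact_mod_cast hk
  have hpow : (0 : ℝ) < 2 ^ k := by positivity
  constructor
  · -- each term bounded by 2^k / (k-1)
    have hterm : ∀ ℓ ∈ Finset.range (k - 1),
        (∑ i ∈ Finset.range (ℓ + 1), (k.choose i : ℝ)) / ((k - 1).choose ℓ : ℝ)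
          ≤ (2 : ℝ) ^ k / ((k : ℝ) - 1) := by
      intro ℓ hℓ
      rw [Finset.mem_range] at hℓ
      have hnum : (∑ i ∈ Finset.range (ℓ + 1), (k.choose i : ℝ)) ≤ (2 : ℝ) ^ k := by
        have h1 : (∑ i ∈ Finset.range (ℓ + 1), k.choose i)
            ≤ ∑ i ∈ Finset.range (k + 1), k.choose i :=
          Finset.sum_le_sum_of_subset (Finset.range_subset_range.mpr (by omega))
        rw [Nat.sum_range_choose] at h1
        push_cast
        exact_mod_cast h1
      have hnum0 : (0 : ℝ) ≤ ∑ i ∈ Finset.range (ℓ + 1), (k.choose i : ℝ) := by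
        positivity
      rcases Nat.eq_zero_or_pos ℓ with h0 | h0
      · subst h0
        simp only [Nat.choose_zero_right, Nat.cast_one]
        rw [Finset.sum_range_one, Nat.choose_zero_right]
        rw [div_one, le_div_iff₀ hk1']
        have : ((k : ℝ) - 1) ≤ 2 ^ k := by
          have : (k : ℝ) ≤ 2 ^ k := by
            exact_mod_cast (Nat.lt_two_pow_self (n := k)).le
          linarith
        push_cast
        nlinarith
      · have hden : ((k : ℝ) - 1) ≤ ((k - 1).choose ℓ : ℝ) := by
          have := nat_le_choose (k - 1) ℓ h0 (by omega)
          have h2 : ((k : ℝ) - 1) = ((k - 1 : ℕ) : ℝ) := by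
            push_cast [Nat.cast_sub (by omega : 1 ≤ k)]; ring
          rw [h2]
          exact_mod_cast this
        exact div_le_div₀ hpow.le hnum hk1' hden
    calc (∑ ℓ ∈ Finset.range (k - 1),
            (∑ i ∈ Finset.range (ℓ + 1), (k.choose i : ℝ)) / ((k - 1).choose ℓ : ℝ))
        ≤ ∑ _ℓ ∈ Finset.range (k - 1), (2 : ℝ) ^ k / ((k : ℝ) - 1) :=
          Finset.sum_le_sum hterm
      _ = (k - 1 : ℕ) * ((2 : ℝ) ^ k / ((k : ℝ) - 1)) := by
          rw [Finset.sum_const, Finset.card_range]; simp [nsmul_eq_mul]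
      _ = ((k : ℝ) - 1) * ((2 : ℝ) ^ k / ((k : ℝ) - 1)) := by
          rw [Nat.cast_sub (by omega : 1 ≤ k)]; norm_num
      _ = (2 : ℝ) ^ k := by field_simp
      _ ≤ (k : ℝ) * 2 ^ k / ((k : ℝ) - 1) := by
          rw [le_div_iff₀ hk1']
          nlinarith
  · rw [div_le_iff₀ hk1']
    have : (2 : ℝ) ^ (k + 1) = 2 * 2 ^ k := by ring
    rw [this]
    nlinarith

end
end
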